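/- arXiv:quant-ph/0512258 — 12 statements merged into one kernel-verified Lean document; each statement's English description precedes it below -/
import Mathlib

section
/- Let X and Z be nonempty finite types and let F be a nonempty finite set of functions from X to Z that is two-universal, i.e. for all distinct x, x' in X, |Z| · |{f ∈ F : f(x) = f(x')}| ≤ |F|. Let B be a nonempty finite type, let (ρ^x)_{x∈X} be PSD matrices indexed by B, set ρ_B := ∑_{x∈X} ρ^x, and let σ be a positive definite matrix indexed by B. For f ∈ F and z ∈ Z set ρ^{f,z} := ∑_{x : f(x)=z} ρ^x. Then (1/|F|) · ∑_{f∈F} [ ∑_{z∈Z} tr((σ^{−1/4} ρ^{f,z} σ^{−1/4})²) − (1/|Z|) · tr((σ^{−1/4} ρ_B σ^{−1/4})²) ] ≤ ∑_{x∈X} tr((σ^{−1/4} ρ^x σ^{−1/4})²). (The bracketed quantity is the conditional L2-distance from uniform d₂(ρ_{f(X)B}|σ) of the hashed state, and the right-hand side equals tr(ρ_{XB}) · 2^{−H₂(ρ_{XB}|σ)} in terms of the collision entropy H₂.) -/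
open Matrix Kronecker Finset
open scoped Classical ComplexOrder

/-!
With `Mₓ := σ^{-1/4} ρˣ σ^{-1/4}`, which is PSD, every trace in the statement expands into the
kernel `t x y := Re tr (Mₓ M_y)`, nonnegative as the trace of a product of PSD matrices. Averaged
over `f ∈ F`, the fibre terms weight each pair `(x, y)` by the collision frequency
`#{f | f x = f y} / #F`, which is `1` on the diagonal and at most `1 / |Z|` off it by
two-universality: the off-diagonal part is absorbed by the subtracted term, and the diagonal
part is the right-hand side.
-/

open scoped MatrixOrder in
theorem Matrix.PosSemidef.trace_mul_nonneg {n 𝕜 : Type*} [Fintype n] [DecidableEq n] [RCLike 𝕜]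
    {A C : Matrix n n 𝕜} (hA : A.PosSemidef) (hC : C.PosSemidef) : 0 ≤ (A * C).trace := by
  obtain ⟨R, rfl⟩ := CStarAlgebra.nonneg_iff_eq_star_mul_self.mp hA.nonneg
  rw [star_eq_conjTranspose, Matrix.mul_assoc, trace_mul_comm, Matrix.mul_assoc,
    ← Matrix.mul_assoc]
  exact (hC.mul_mul_conjTranspose_same R).trace_nonneg

theorem Matrix.trace_sum_sq {ι n R : Type*} [Fintype n] [DecidableEq n] [Semiring R]
    (s : Finset ι) (M : ι → Matrix n n R) :
    ((∑ i ∈ s, M i) ^ 2).trace = ∑ i ∈ s, ∑ j ∈ s, (M i * M j).trace := by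
  simp only [sq, sum_mul_sum, trace_sum]

theorem Finset.sum_sum_fiber_eq_sum_sum_ite {X Z M : Type*} [Fintype X] [Fintype Z]
    [DecidableEq Z] [AddCommMonoid M] (f : X → Z) (t : X → X → M) :
    ∑ z, ∑ x with f x = z, ∑ y with f y = z, t x y
      = ∑ x, ∑ y, if f x = f y then t x y else 0 := by
  rw [← sum_fiberwise univ f fun x => ∑ y, if f x = f y then t x y else 0]
  refine sum_congr rfl fun z _ => sum_congr rfl fun x hx => ?_
  obtain rfl := (mem_filter.mp hx).2
  rw [sum_filter]
  exact sum_congr rfl fun y _ => if_congr eq_comm rfl rfl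

theorem Finset.sum_sum_sum_ite_eq_card_smul {X Z M : Type*} [Fintype X] [DecidableEq Z]
    [AddCommMonoid M] (F : Finset (X → Z)) (t : X → X → M) :
    ∑ f ∈ F, ∑ x, ∑ y, (if f x = f y then t x y else 0)
      = ∑ x, ∑ y, #{f ∈ F | f x = f y} • t x y := by
  rw [sum_comm]
  refine sum_congr rfl fun x _ => ?_
  rw [sum_comm]
  refine sum_congr rfl fun y _ => ?_
  rw [← sum_filter, sum_const]

def IsTwoUniversal {X Z : Type*} [Fintype Z] [DecidableEq Z] (F : Finset (X → Z)) : Prop :=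
  ∀ x x' : X, x ≠ x' → Fintype.card Z * #{f ∈ F | f x = f x'} ≤ #F

namespace IsTwoUniversal

variable {X Z : Type*} [Fintype Z] [DecidableEq Z] [Nonempty Z] {F : Finset (X → Z)}

theorem card_filter_apply_eq_le (htu : IsTwoUniversal F) (x y : X) :
    (#{f ∈ F | f x = f y} : ℝ) ≤ #F / Fintype.card Z + if x = y then (#F : ℝ) else 0 := by
  by_cases hxy : x = y
  · subst hxy
    simp only [filter_true, if_true]
    have : (0 : ℝ) ≤ #F / Fintype.card Z := by positivity
    linarith
  · rw [if_neg hxy, add_zero, le_div_iff₀ (by exact_mod_cast Fintype.card_pos), mul_comm]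
    exact_mod_cast htu x y hxy

theorem sum_fiber_sub_le [Fintype X] (htu : IsTwoUniversal F) (hF : F.Nonempty)
    (t : X → X → ℝ) (ht : ∀ x y, 0 ≤ t x y) :
    (#F : ℝ)⁻¹ * ∑ f ∈ F, (∑ z, ∑ x with f x = z, ∑ y with f y = z, t x y
        - (Fintype.card Z : ℝ)⁻¹ * ∑ x, ∑ y, t x y)
      ≤ ∑ x, t x x := by
  have hcollisions : ∑ x, ∑ y, (#{f ∈ F | f x = f y} : ℝ) * t x y
      ≤ #F / Fintype.card Z * ∑ x, ∑ y, t x y + #F * ∑ x, t x x := calc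
    _ ≤ ∑ x, ∑ y, (#F / Fintype.card Z + if x = y then (#F : ℝ) else 0) * t x y :=
      sum_le_sum fun x _ => sum_le_sum fun y _ =>
        mul_le_mul_of_nonneg_right (htu.card_filter_apply_eq_le x y) (ht x y)
    _ = _ := by simp only [add_mul, ite_mul, zero_mul, sum_add_distrib, sum_ite_eq,
      mem_univ, if_true, ← mul_sum]
  simp only [sum_sub_distrib, sum_sum_fiber_eq_sum_sum_ite, sum_sum_sum_ite_eq_card_smul,
    nsmul_eq_mul, sum_const]
  rw [inv_mul_le_iff₀ (by exact_mod_cast hF.card_pos)]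
  rw [div_eq_mul_inv] at hcollisions
  linarith

end IsTwoUniversal

theorem l2_distance_two_universal_hashing_general
    {X Z B : Type*} [Fintype X] [Fintype Z] [Fintype B]
    [DecidableEq Z] [DecidableEq B]
    [Nonempty Z]
    (F : Finset (X → Z)) (hF : F.Nonempty)
    (htu : ∀ x x' : X, x ≠ x' →
      Fintype.card Z * (F.filter fun f => f x = f x').card ≤ F.card)
    (ρ : X → Matrix B B ℂ) (hρ : ∀ x, (ρ x).PosSemidef)
    (σ4 : Matrix B B ℂ) (hσ4 : σ4.PosSemidef) :
    (F.card : ℝ)⁻¹ *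
        ∑ f ∈ F,
          ((∑ z : Z,
              (((σ4⁻¹ * (∑ x ∈ univ.filter (fun x => f x = z), ρ x) * σ4⁻¹) ^ 2).trace).re)
            - (Fintype.card Z : ℝ)⁻¹ *
                (((σ4⁻¹ * (∑ x : X, ρ x) * σ4⁻¹) ^ 2).trace).re)
      ≤ ∑ x : X, (((σ4⁻¹ * ρ x * σ4⁻¹) ^ 2).trace).re := by
  set M : X → Matrix B B ℂ := fun x => σ4⁻¹ * ρ x * σ4⁻¹
  have hM : ∀ x, (M x).PosSemidef := fun x => by
    simpa only [conjTranspose_nonsing_inv, hσ4.1.eq] using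
      (hρ x).mul_mul_conjTranspose_same σ4⁻¹
  have hsandwich : ∀ s : Finset X, (((σ4⁻¹ * (∑ x ∈ s, ρ x) * σ4⁻¹) ^ 2).trace).re
      = ∑ x ∈ s, ∑ y ∈ s, ((M x * M y).trace).re := fun s => by
    simp only [mul_sum, sum_mul, trace_sum_sq, Complex.re_sum, M]
  have hdiag : ∀ x, (((σ4⁻¹ * ρ x * σ4⁻¹) ^ 2).trace).re = ((M x * M x).trace).re := fun x => by
    rw [sq]
  simp only [hsandwich, hdiag]
  exact IsTwoUniversal.sum_fiber_sub_le htu hF _ fun x y =>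
    (Complex.nonneg_iff.mp ((hM x).trace_mul_nonneg (hM y))).1

/-- The expected conditional L2-distance from uniform of a key obtained by
two-universal hashing is bounded by `tr(ρ_XB) · 2^{-H₂(ρ_XB|σ)}`, i.e.
`∑ₓ tr((σ^{-1/4} ρ^x σ^{-1/4})²)`. -/
theorem l2_distance_two_universal_hashing
    {X Z B : Type*} [Fintype X] [Fintype Z] [Fintype B]
    [DecidableEq X] [DecidableEq Z] [DecidableEq B]
    [Nonempty X] [Nonempty Z] [Nonempty B]
    (F : Finset (X → Z)) (hF : F.Nonempty)
    (htu : ∀ x x' : X, x ≠ x' →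
      Fintype.card Z * (F.filter fun f => f x = f x').card ≤ F.card)
    (ρ : X → Matrix B B ℂ) (hρ : ∀ x, (ρ x).PosSemidef)
    (σ : Matrix B B ℂ) (hσ : σ.PosDef)
    (σ4 : Matrix B B ℂ) (hσ4 : σ4.PosSemidef) (hσ4root : σ4 ^ 4 = σ) :
    (F.card : ℝ)⁻¹ *
        ∑ f ∈ F,
          ((∑ z : Z,
              (((σ4⁻¹ * (∑ x ∈ univ.filter (fun x => f x = z), ρ x) * σ4⁻¹) ^ 2).trace).re)
            - (Fintype.card Z : ℝ)⁻¹ *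
                (((σ4⁻¹ * (∑ x : X, ρ x) * σ4⁻¹) ^ 2).trace).re)
      ≤ ∑ x : X, (((σ4⁻¹ * ρ x * σ4⁻¹) ^ 2).trace).re :=
  l2_distance_two_universal_hashing_general F hF htu ρ hρ σ4 hσ4
end

section
/- Let X and Y be nonempty finite types, P a probability distribution on X × Y with marginal P_Y(y) := ∑_x P(x,y) and conditional Shannon entropy H(X|Y), let n ≥ 1, and let δ be a real number with 0 ≤ δ ≤ log₂|X|. For n-tuples x ∈ Xⁿ, y ∈ Yⁿ write Pⁿ(x,y) := ∏ᵢ P(xᵢ,yᵢ) and, for pairs with Pⁿ(x,y) > 0, L(x,y) := −∑ᵢ log₂(P(xᵢ,yᵢ)/P_Y(yᵢ)). Then both of the following hold: ∑ over {(x,y) : Pⁿ(x,y) > 0 and L(x,y) ≥ n·(H(X|Y)+δ)} of Pⁿ(x,y) is at most 2^{−n·δ²/(2·log₂(|X|+3)²)}, and ∑ over {(x,y) : Pⁿ(x,y) > 0 and L(x,y) ≤ n·(H(X|Y)−δ)} of Pⁿ(x,y) is at most 2^{−n·δ²/(2·log₂(|X|+3)²)}. (Concentration of the conditional log-likelihood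 of i.i.d. samples around the conditional Shannon entropy.) -/
open Finset
open scoped Classical

/-- Conditional Shannon entropy `H(X|Y)` (base 2) of a distribution `P` on `X × Y`,
with marginal `P_Y(y) = ∑ₓ P(x,y)`. -/
noncomputable def condEnt {X Y : Type*} [Fintype X] [Fintype Y] (P : X × Y → ℝ) : ℝ :=
  ∑ p : X × Y, if 0 < P p then P p * Real.logb 2 ((∑ x : X, P (x, p.2)) / P p) else 0

set_option maxHeartbeats 2000000

namespace CLLC
open Real

lemma exp_le_poly {x : ℝ} (h0 : 0 ≤ x) (h1 : x ≤ 1) :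
    Real.exp x ≤ 1 + x + x^2/2 + x^3/6 + x^4/24 + x^5/120 + x^6/720 + x^7/2520 := by
  have h := Real.exp_bound (x := x) (by rw [abs_of_nonneg h0]; exact h1) (n := 7) (by norm_num)
  rw [abs_of_nonneg h0] at h
  have hs : ∑ m ∈ range 7, x ^ m / (m.factorial : ℝ)
      = 1 + x + x^2/2 + x^3/6 + x^4/24 + x^5/120 + x^6/720 := by
    simp [Finset.sum_range_succ, Nat.factorial]
  rw [hs] at h
  have h2 := (abs_le.1 h).2
  norm_num [Nat.factorial] at h2
  have h3 : (0:ℝ) ≤ x^7 := pow_nonneg h0 7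
  nlinarith

lemma sq_le_four_exp {x : ℝ} (hx : 0 ≤ x) : x^2 ≤ 4 * Real.exp (x - 2) := by
  have h := Real.add_one_le_exp (x/2 - 1)
  have h4 : x/2 ≤ Real.exp (x/2 - 1) := by linarith
  have h5 : x/2 * (x/2) ≤ Real.exp (x/2-1) * Real.exp (x/2-1) :=
    mul_le_mul h4 h4 (by linarith) (Real.exp_pos _).le
  have h6 : Real.exp (x/2-1) * Real.exp (x/2-1) = Real.exp (x-2) := by
    rw [← Real.exp_add]; ring_nf
  nlinarith

/-- decay bound when `4 ≤ γ * c` : for `σ ≥ c`,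
`(σ - c/2)^2 * exp (-(γ σ)) ≤ (c/2)^2 * exp (-(γ c))`. -/
lemma decay1 {c γ σ : ℝ} (hc : 0 ≤ c) (hγ : 0 ≤ γ) (hγc : 4 ≤ γ * c) (hσ : c ≤ σ) :
    (σ - c/2)^2 * Real.exp (-(γ * σ)) ≤ (c/2)^2 * Real.exp (-(γ * c)) := by
  have hu : 0 ≤ σ - c := by linarith
  have h1 : 1 + γ*(σ-c)/2 ≤ Real.exp (γ*(σ-c)/2) := by
    have := Real.add_one_le_exp (γ*(σ-c)/2); linarith
  have h2 : σ - c/2 ≤ (c/2) * Real.exp (γ*(σ-c)/2) := by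
    have hm : (c/2) * (1 + γ*(σ-c)/2) ≤ (c/2) * Real.exp (γ*(σ-c)/2) :=
      mul_le_mul_of_nonneg_left h1 (by linarith)
    have hx : σ - c/2 ≤ (c/2) * (1 + γ*(σ-c)/2) := by nlinarith
    linarith
  have h3 : (σ - c/2)^2 ≤ (c/2)^2 * Real.exp (γ*(σ-c)) := by
    have he : Real.exp (γ*(σ-c)/2) * Real.exp (γ*(σ-c)/2) = Real.exp (γ*(σ-c)) := by
      rw [← Real.exp_add]; ring_nf
    have hnn : 0 ≤ σ - c/2 := by linarith
    nlinarith [Real.exp_pos (γ*(σ-c)/2)]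
  have h4 : (σ - c/2)^2 * Real.exp (-(γ*σ)) ≤ (c/2)^2 * Real.exp (γ*(σ-c)) * Real.exp (-(γ*σ)) :=
    mul_le_mul_of_nonneg_right h3 (Real.exp_pos _).le
  have h5 : Real.exp (γ*(σ-c)) * Real.exp (-(γ*σ)) = Real.exp (-(γ*c)) := by
    rw [← Real.exp_add]; ring_nf
  calc (σ - c/2)^2 * Real.exp (-(γ*σ)) ≤ (c/2)^2 * Real.exp (γ*(σ-c)) * Real.exp (-(γ*σ)) := h4
    _ = (c/2)^2 * Real.exp (-(γ*c)) := by rw [mul_assoc, h5]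

/-- decay bound in general: for `σ ≥ c/2`,
`(σ-c/2)^2 exp(-(γσ)) ≤ (4/γ^2) exp(-2) exp (-(γ c/2))`. -/
lemma decay2 {c γ σ : ℝ} (hγ : 0 < γ) (hσ : c/2 ≤ σ) :
    (σ - c/2)^2 * Real.exp (-(γ * σ)) ≤ 4/γ^2 * Real.exp (-2) * Real.exp (-(γ * c/2)) := by
  have hx : 0 ≤ γ * (σ - c/2) := by nlinarith
  have h := sq_le_four_exp hx
  have h1 : (σ - c/2)^2 = (γ*(σ-c/2))^2 / γ^2 := by
    field_simp
  have h2 : Real.exp (γ*(σ-c/2) - 2) * Real.exp (-(γ*σ)) = Real.exp (-2) * Real.exp (-(γ*c/2)) := by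
    rw [← Real.exp_add, ← Real.exp_add]; ring_nf
  calc (σ - c/2)^2 * Real.exp (-(γ*σ)) = (γ*(σ-c/2))^2/γ^2 * Real.exp (-(γ*σ)) := by rw [← h1]
    _ ≤ (4 * Real.exp (γ*(σ-c/2) - 2))/γ^2 * Real.exp (-(γ*σ)) := by gcongr
    _ = 4/γ^2 * (Real.exp (γ*(σ-c/2) - 2) * Real.exp (-(γ*σ))) := by ring
    _ = 4/γ^2 * Real.exp (-2) * Real.exp (-(γ*c/2)) := by rw [h2]; ring


lemma exp_half_mul {a : ℝ} : Real.exp a * Real.exp a = Real.exp (2*a) := by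
  rw [← Real.exp_add]; ring_nf

lemma e09 : Real.exp 0.9 ≤ 2.4597 :=
  (exp_le_poly (by norm_num) (by norm_num)).trans (by norm_num)

lemma exp_one_plus {x : ℝ} (h0 : 0 ≤ x) (h1 : x ≤ 1) (U : ℝ)
    (hU : 2.7182818286 * (1 + x + x^2/2 + x^3/6 + x^4/24 + x^5/120 + x^6/720 + x^7/2520) ≤ U) :
    Real.exp (1 + x) ≤ U := by
  rw [Real.exp_add]
  have h2 := exp_le_poly h0 h1
  have h3 := Real.exp_one_lt_d9
  nlinarith [Real.exp_pos x, (Real.exp_pos 1).le]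

lemma exp_two_plus {x : ℝ} (h0 : 0 ≤ x) (h1 : x ≤ 1) (U : ℝ)
    (hU : 2.7182818286 * 2.7182818286 * (1 + x + x^2/2 + x^3/6 + x^4/24 + x^5/120 + x^6/720 + x^7/2520) ≤ U) :
    Real.exp (2 + x) ≤ U := by
  have he2 : Real.exp (2 + x) = Real.exp 1 * Real.exp 1 * Real.exp x := by
    rw [← Real.exp_add, ← Real.exp_add]; ring_nf
  rw [he2]
  have h2 := exp_le_poly h0 h1
  have h3 := Real.exp_one_lt_d9
  have hs1 : Real.exp 1 * Real.exp 1 ≤ 2.7182818286 * 2.7182818286 := by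
    nlinarith [(Real.exp_pos 1).le]
  have hP0 : 0 ≤ 1 + x + x^2/2 + x^3/6 + x^4/24 + x^5/120 + x^6/720 + x^7/2520 := by positivity
  calc Real.exp 1 * Real.exp 1 * Real.exp x
      ≤ (2.7182818286 * 2.7182818286) * (1 + x + x^2/2 + x^3/6 + x^4/24 + x^5/120 + x^6/720 + x^7/2520) :=
        mul_le_mul hs1 h2 (Real.exp_pos x).le (by norm_num)
    _ ≤ U := hU

lemma e1025 : Real.exp 1.025 ≤ 2.7871 := by
  have := exp_one_plus (x := 0.025) (by norm_num) (by norm_num) 2.7871 (by norm_num)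
  norm_num at this ⊢; linarith
lemma e115 : Real.exp 1.15 ≤ 3.1582 := by
  have := exp_one_plus (x := 0.15) (by norm_num) (by norm_num) 3.1582 (by norm_num)
  norm_num at this ⊢; linarith
lemma e12 : Real.exp 1.2 ≤ 3.3202 := by
  have := exp_one_plus (x := 0.2) (by norm_num) (by norm_num) 3.3202 (by norm_num)
  norm_num at this ⊢; linarith
lemma e1425 : Real.exp 1.425 ≤ 4.1579 := by
  have := exp_one_plus (x := 0.425) (by norm_num) (by norm_num) 4.1579 (by norm_num)
  norm_num at this ⊢; linarith
lemma e16 : Real.exp 1.6 ≤ 4.9531 := by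
  have := exp_one_plus (x := 0.6) (by norm_num) (by norm_num) 4.9531 (by norm_num)
  norm_num at this ⊢; linarith
lemma e17 : Real.exp 1.7 ≤ 5.4740 := by
  have := exp_one_plus (x := 0.7) (by norm_num) (by norm_num) 5.4740 (by norm_num)
  norm_num at this ⊢; linarith
lemma e2 : Real.exp 2 ≤ 7.3891 := by
  have := exp_two_plus (x := 0) (by norm_num) (by norm_num) 7.3891 (by norm_num)
  norm_num at this ⊢; linarith
lemma e205 : Real.exp 2.05 ≤ 7.7680 := by
  have := exp_two_plus (x := 0.05) (by norm_num) (by norm_num) 7.7680 (by norm_num)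
  norm_num at this ⊢; linarith
lemma e235 : Real.exp 2.35 ≤ 10.4856 := by
  have := exp_two_plus (x := 0.35) (by norm_num) (by norm_num) 10.4856 (by norm_num)
  norm_num at this ⊢; linarith

lemma eneg2 : Real.exp (-2) ≤ 0.1353353 := by
  have h1 : (2.7182818283:ℝ) * 2.7182818283 < Real.exp 2 := by
    have h3 := Real.exp_one_gt_d9
    have : Real.exp 2 = Real.exp 1 * Real.exp 1 := by rw [← Real.exp_add]; norm_num
    nlinarith
  rw [Real.exp_neg]
  have h2 := inv_anti₀ (show (0:ℝ) < 2.7182818283*2.7182818283 by norm_num) h1.le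
  calc (Real.exp 2)⁻¹ ≤ (2.7182818283*2.7182818283:ℝ)⁻¹ := h2
    _ ≤ 0.1353353 := by norm_num

lemma elog5 : (1.6:ℝ) ≤ Real.log 5 := by
  rw [Real.le_log_iff_exp_le (by norm_num)]
  linarith [e16]

/-- bracketing `exp (c/2) - 3 exp (-(c/2))` on an interval. -/
lemma bracket {c b U : ℝ} (hcb : c ≤ b) (hU : Real.exp (b/2) ≤ U) :
    Real.exp (c/2) - 3*Real.exp (-(c/2)) ≤ U - 3/U := by
  have hU0 : 0 < U := lt_of_lt_of_le (Real.exp_pos _) hU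
  have h1 : Real.exp (c/2) ≤ U := le_trans (Real.exp_le_exp.2 (by linarith)) hU
  have h2 : Real.exp (-(b/2)) ≤ Real.exp (-(c/2)) := Real.exp_le_exp.2 (by linarith)
  have h3 : (3:ℝ)/U ≤ 3*Real.exp (-(b/2)) := by
    rw [Real.exp_neg]
    have h4 : 1/U ≤ 1/Real.exp (b/2) := by
      apply one_div_le_one_div_of_le (Real.exp_pos _) hU
    have h5 : (Real.exp (b/2))⁻¹ = 1/Real.exp (b/2) := by rw [one_div]
    rw [h5]
    have : (3:ℝ)/U = 3*(1/U) := by ring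
    rw [this]
    linarith
  linarith


lemma helperA {c x : ℝ} (h0 : 0 ≤ x) (hxc : x ≤ c) : (x - c/2)^2 ≤ (c/2)^2 := by nlinarith

lemma budget {l c N B a : ℝ} (hl : 1.4426950 ≤ 1/l) (hN : 1/2 ≤ N) (ha : 0 ≤ a) (hac : a ≤ c)
    (hB : B ≤ 0.5963475 * a^2) : B ≤ (1/l - 1/4)*c^2*N := by
  have ha2 : a^2 ≤ c^2 := by nlinarith
  have h1 : 1.1926950*c^2 ≤ (1/l-1/4)*c^2 := by nlinarith [sq_nonneg c]
  have h2 : (1/l-1/4)*c^2*(1/2) ≤ (1/l-1/4)*c^2*N := by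
    apply mul_le_mul_of_nonneg_left hN
    nlinarith [sq_nonneg c]
  nlinarith

lemma budget2 {l c N B : ℝ} (hl : 1.4426950 ≤ 1/l) (hN : 1 ≤ N) (hc2 : 0 ≤ c^2)
    (hB : B ≤ c^2/2) : B ≤ (1/l - 1/4)*c^2*N := by
  have h1 : 1.1926950*c^2 ≤ (1/l-1/4)*c^2 := by nlinarith
  have h2 : (1/l-1/4)*c^2*1 ≤ (1/l-1/4)*c^2*N := by
    apply mul_le_mul_of_nonneg_left hN
    nlinarith
  nlinarith

lemma core {X : Type*} [Fintype X] [Nonempty X] (q : X → ℝ) (hq0 : ∀ x, 0 ≤ q x)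
    (hq1 : ∑ x, q x = 1) (s : ℝ)
    (hs : |s| ≤ Real.log 2 / Real.log ((Fintype.card X : ℝ) + 3)) :
    ∑ x, (if 0 < q x then
        q x ^ (1-s) * (Real.log (1 / q x) - Real.log ((Fintype.card X : ℝ) + 3) / 2) ^ 2 else 0)
      ≤ Real.log ((Fintype.card X : ℝ) + 3) ^ 2 / Real.log 2
          * ∑ x, (if 0 < q x then q x ^ (1-s) else 0) := by
  classical
  set m : ℝ := (Fintype.card X : ℝ) with hm
  have hm1 : (1:ℝ) ≤ m := by
    rw [hm]; exact_mod_cast Fintype.card_pos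
  set l : ℝ := Real.log 2 with hldef
  set c : ℝ := Real.log (m+3) with hcdef
  have hl0 : (0:ℝ) < l := Real.log_pos one_lt_two
  have hlu : l < 0.6931471808 := Real.log_two_lt_d9
  have hll : (0.6931471803:ℝ) < l := Real.log_two_gt_d9
  have hinv : (1.4426950:ℝ) ≤ 1/l := by
    rw [le_div_iff₀ hl0]; nlinarith
  have hc4 : Real.log 4 ≤ c := Real.log_le_log (by norm_num) (by linarith)
  have hc0 : 0 < c := lt_of_lt_of_le (Real.log_pos (by norm_num)) hc4
  have hlc : l < c := by
    have : Real.log 2 < Real.log 4 := Real.log_lt_log (by norm_num) (by norm_num)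
    linarith
  have hml : Real.log m ≤ c := by
    rcases eq_or_lt_of_le hm1 with h|h
    · rw [← h]; simp; positivity
    · exact (Real.log_le_log (by linarith) (by linarith))
  have hmlog0 : 0 ≤ Real.log m := Real.log_nonneg hm1
  have hq1' : ∀ x, q x ≤ 1 := by
    intro x
    calc q x ≤ ∑ x, q x := Finset.single_le_sum (fun i _ => hq0 i) (mem_univ x)
    _ = 1 := hq1
  have hec : Real.exp c = m + 3 := Real.exp_log (by linarith)
  have hs1 : s ≤ l / c := le_trans (le_abs_self s) hs
  have hs2 : -(l/c) ≤ s := neg_le_of_abs_le hs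
  have hσ : ∀ x : X, Real.log (1 / q x) = -Real.log (q x) := by
    intro x; rw [one_div, Real.log_inv]
  have hσ0 : ∀ x, 0 < q x → 0 ≤ Real.log (1 / q x) := by
    intro x h1; rw [hσ]
    have := Real.log_nonpos (hq0 x) (hq1' x)
    linarith
  have hσc : ∀ x, 0 < q x → q x < Real.exp (-c) → c ≤ Real.log (1 / q x) := by
    intro x h1 h2
    rw [hσ]
    have h3 : Real.log (q x) ≤ Real.log (Real.exp (-c)) := Real.log_le_log h1 h2.le
    rw [Real.log_exp] at h3
    linarith
  set N : ℝ := ∑ x, (if 0 < q x then q x ^ (1-s) else 0) with hN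
  have hN0 : 0 ≤ N := by
    apply Finset.sum_nonneg
    intro x _
    by_cases h : 0 < q x
    · simp only [h, if_true]; exact Real.rpow_nonneg (hq0 x) _
    · simp [h]
  -- split the sum
  have hsplit : ∑ x, (if 0 < q x then q x ^ (1-s) * (Real.log (1 / q x) - c / 2) ^ 2 else 0)
      = (∑ x, (if 0 < q x ∧ Real.exp (-c) ≤ q x then
            q x ^ (1-s) * (Real.log (1 / q x) - c / 2) ^ 2 else 0))
        + ∑ x, (if 0 < q x ∧ q x < Real.exp (-c) then
            q x ^ (1-s) * (Real.log (1 / q x) - c / 2) ^ 2 else 0) := by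
    rw [← Finset.sum_add_distrib]
    apply Finset.sum_congr rfl
    intro x _
    by_cases h1 : 0 < q x
    · by_cases h2 : Real.exp (-c) ≤ q x
      · simp [h1, h2, not_lt.2 h2]
      · simp [h1, h2, not_le.1 h2]
    · simp [h1]
  -- big part
  have hbig : (∑ x, (if 0 < q x ∧ Real.exp (-c) ≤ q x then
        q x ^ (1-s) * (Real.log (1 / q x) - c / 2) ^ 2 else 0)) ≤ c^2/4 * N := by
    rw [hN, Finset.mul_sum]
    apply Finset.sum_le_sum
    intro x _
    by_cases h1 : 0 < q x
    · by_cases h2 : Real.exp (-c) ≤ q x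
      · simp only [h1, h2, and_self, if_true, if_pos]
        have hσ1 : Real.log (1 / q x) ≤ c := by
          rw [hσ]
          have h3 : Real.log (Real.exp (-c)) ≤ Real.log (q x) :=
            Real.log_le_log (Real.exp_pos _) h2
          rw [Real.log_exp] at h3
          linarith
        have hσ2 := hσ0 x h1
        have hsq : (Real.log (1 / q x) - c / 2) ^ 2 ≤ (c/2)^2 := helperA hσ2 hσ1
        have := mul_le_mul_of_nonneg_left hsq (Real.rpow_nonneg (hq0 x) (1-s))
        calc q x ^ (1-s) * (Real.log (1 / q x) - c / 2) ^ 2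
            ≤ q x ^ (1-s) * (c/2)^2 := this
          _ = c^2/4 * q x ^ (1-s) := by ring
      · simp only [h2, and_false, if_false, if_pos h1]
        positivity
    · simp only [h1, false_and, if_false]
      simp [h1]
  -- small part
  have hsmall : (∑ x, (if 0 < q x ∧ q x < Real.exp (-c) then
        q x ^ (1-s) * (Real.log (1 / q x) - c / 2) ^ 2 else 0)) ≤ (1/l - 1/4) * c^2 * N := by
    have hSSle : ∀ K : ℝ, 0 ≤ K →
        (∀ x, 0 < q x → q x < Real.exp (-c) →
          q x ^ (1-s) * (Real.log (1/q x) - c/2)^2 ≤ K) →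
        (∑ x, (if 0 < q x ∧ q x < Real.exp (-c) then
          q x ^ (1-s) * (Real.log (1 / q x) - c / 2) ^ 2 else 0)) ≤ m * K := by
      intro K hK0 hpt
      calc (∑ x, (if 0 < q x ∧ q x < Real.exp (-c) then
          q x ^ (1-s) * (Real.log (1 / q x) - c / 2) ^ 2 else 0))
          ≤ ∑ _x : X, K := by
            apply Finset.sum_le_sum
            intro x _
            by_cases h : 0 < q x ∧ q x < Real.exp (-c)
            · rw [if_pos h]; exact hpt x h.1 h.2
            · rw [if_neg h]; exact hK0
        _ = m * K := by rw [Finset.sum_const, Finset.card_univ, nsmul_eq_mul, hm]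
    have hm1case : m < 2 → (∑ x, (if 0 < q x ∧ q x < Real.exp (-c) then
          q x ^ (1-s) * (Real.log (1 / q x) - c / 2) ^ 2 else 0)) = 0 := by
      intro hm2
      apply Finset.sum_eq_zero
      intro x _
      rw [if_neg]
      rintro ⟨h1, h2⟩
      have hcard : Fintype.card X = 1 := by
        rw [hm] at hm2
        have h3 : Fintype.card X < 2 := by exact_mod_cast hm2
        have h4 : 0 < Fintype.card X := Fintype.card_pos
        omega
      obtain ⟨x₀, hx₀⟩ := Fintype.card_eq_one_iff.mp hcard
      have hsum : ∑ y, q y = q x₀ := by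
        apply Finset.sum_eq_single_of_mem x₀ (mem_univ _)
        intro b _ hb; exact absurd (hx₀ b) hb
      have hq1x : q x = 1 := by rw [hx₀ x, ← hsum, hq1]
      have hle1 : Real.exp (-c) ≤ 1 := by
        rw [Real.exp_le_one_iff]; linarith
      rw [hq1x] at h2; linarith
    have hRHS0 : 0 ≤ (1/l - 1/4) * c^2 * N := by
      apply mul_nonneg (mul_nonneg (by linarith) (sq_nonneg c)) hN0
    have hme : m * Real.exp (-c) ≤ 1 := by
      rw [Real.exp_neg, hec, ← div_eq_mul_inv]
      rw [div_le_one (by linarith)]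
      linarith
    rcases le_or_gt s 0 with hsneg | hspos
    · -- s ≤ 0
      have h1s : (1:ℝ) ≤ 1 - s := by linarith
      have hNplain : N = ∑ x, q x ^ (1-s) := by
        rw [hN]; apply Finset.sum_congr rfl
        intro x _
        by_cases h : 0 < q x
        · simp [h]
        · have hq : q x = 0 := le_antisymm (not_lt.1 h) (hq0 x)
          simp [h, hq, Real.zero_rpow (by linarith : (1:ℝ)-s ≠ 0)]
      have hm0 : (0:ℝ) < m := by linarith
      have hNhalf : 1/2 ≤ N := by
        have hw : ∀ i ∈ (univ : Finset X), (0:ℝ) ≤ 1/m := fun i _ => by positivity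
        have hwsum : ∑ _i : X, (1:ℝ)/m = 1 := by
          rw [Finset.sum_const, Finset.card_univ, nsmul_eq_mul, ← hm]; field_simp
        have hz : ∀ i ∈ (univ:Finset X), 0 ≤ q i := fun i _ => hq0 i
        have hj := Real.rpow_arith_mean_le_arith_mean_rpow univ (fun _ => 1/m) q hw hwsum hz h1s
        have hL : (∑ i : X, 1/m * q i) = 1/m := by rw [← Finset.mul_sum, hq1, mul_one]
        have hR : (∑ i : X, 1/m * q i ^ (1-s)) = 1/m * N := by rw [← Finset.mul_sum, ← hNplain]
        simp only [hL, hR] at hj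
        have hrw : ((1:ℝ)/m)^(1-s) = Real.exp (-((1-s) * Real.log m)) := by
          rw [Real.rpow_def_of_pos (by positivity), one_div, Real.log_inv]; ring_nf
        have h7 : m * ((1:ℝ)/m)^(1-s) ≤ N := by
          have h9 := mul_le_mul_of_nonneg_left hj (le_of_lt hm0)
          have h8 : m * (1/m*N) = N := by field_simp
          rw [h8] at h9
          linarith
        have hexp : (1:ℝ)/2 ≤ m * ((1:ℝ)/m)^(1-s) := by
          rw [hrw]
          have hem : m = Real.exp (Real.log m) := (Real.exp_log hm0).symm
          calc (1:ℝ)/2 = Real.exp (-l) := by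
                rw [Real.exp_neg, hldef, Real.exp_log (by norm_num : (0:ℝ) < 2)]; norm_num
            _ ≤ Real.exp (Real.log m) * Real.exp (-((1-s) * Real.log m)) := by
                rw [← Real.exp_add, Real.exp_le_exp]
                have h5 : -(l/c) * Real.log m ≤ s * Real.log m :=
                  mul_le_mul_of_nonneg_right hs2 hmlog0
                have h6 : (l/c) * Real.log m ≤ l := by
                  rw [div_mul_eq_mul_div, div_le_iff₀ hc0]
                  exact mul_le_mul_of_nonneg_left hml hl0.le
                have heq : Real.log m + -((1-s)*Real.log m) = s * Real.log m := by ring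
                rw [heq]
                linarith
            _ = m * Real.exp (-((1-s) * Real.log m)) := by rw [← hem]
        linarith
      have hpt0 : ∀ x, 0 < q x → q x ^ (1-s) ≤ Real.exp (-(Real.log (1/q x))) := by
        intro x h1
        have h2 := Real.rpow_le_rpow_of_exponent_ge h1 (hq1' x) h1s
        rw [Real.rpow_one] at h2
        rw [hσ, neg_neg, Real.exp_log h1]
        exact h2
      rcases le_or_gt 4 c with hc4' | hc4''
      · -- c ≥ 4
        apply le_trans (hSSle ((c/2)^2 * Real.exp (-c)) (by positivity) ?_) ?_
        · intro x h1 h2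
          have hσx := hσc x h1 h2
          have hd := decay1 (le_of_lt hc0) zero_le_one (by linarith : 4 ≤ 1*c) hσx
          simp only [one_mul] at hd
          calc q x ^ (1-s) * (Real.log (1/q x) - c/2)^2
              ≤ Real.exp (-(Real.log (1/q x))) * (Real.log (1/q x) - c/2)^2 :=
                mul_le_mul_of_nonneg_right (hpt0 x h1) (sq_nonneg _)
            _ = (Real.log (1/q x) - c/2)^2 * Real.exp (-(Real.log (1/q x))) := by ring
            _ ≤ (c/2)^2 * Real.exp (-c) := hd
        · have hKb : m * ((c/2)^2 * Real.exp (-c)) ≤ 0.5963475 * c^2 := by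
            have heq : m * ((c/2)^2*Real.exp (-c)) = (c/2)^2 * (m * Real.exp (-c)) := by ring
            rw [heq]
            have h1 := mul_le_of_le_one_right (by positivity : (0:ℝ) ≤ (c/2)^2) hme
            have h2 : (c/2)^2 = c^2/4 := by ring
            have h3 : (0:ℝ) ≤ c^2 := sq_nonneg c
            linarith
          exact budget hinv hNhalf (le_of_lt hc0) le_rfl hKb
      · -- c < 4
        by_cases hm2 : m < 2
        · rw [hm1case hm2]; exact hRHS0
        · push_neg at hm2
          have hc5 : Real.log 5 ≤ c := Real.log_le_log (by norm_num) (by linarith)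
          have h16 : (1.6:ℝ) ≤ c := le_trans elog5 hc5
          have hbr0 : 0 ≤ Real.exp (c/2) - 3*Real.exp (-(c/2)) := by
            have e1 : 1 + c/2 ≤ Real.exp (c/2) := by
              have := Real.add_one_le_exp (c/2); linarith
            have e2 : Real.exp (-(c/2)) * Real.exp (c/2) = 1 := by
              rw [← Real.exp_add]; simp
            nlinarith [Real.exp_pos (-(c/2))]
          have hintB : ∀ a b U : ℝ, 0 ≤ a → a ≤ c → c ≤ b → Real.exp (b/2) ≤ U →
              4*0.1353353*(U - 3/U) ≤ 0.5963475*a^2 →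
              (∑ x, (if 0 < q x ∧ q x < Real.exp (-c) then
                q x ^ (1-s) * (Real.log (1 / q x) - c / 2) ^ 2 else 0))
                ≤ (1/l - 1/4)*c^2*N := by
            intro a b U ha hac hcb hU hnum
            apply le_trans (hSSle (4*Real.exp (-2)*Real.exp (-(c/2))) (by positivity) ?_) ?_
            · intro x h1 h2
              have hσx := hσc x h1 h2
              have hd := decay2 (γ := 1) (c := c) (σ := Real.log (1/q x)) one_pos (by linarith)
              simp only [one_mul, one_pow, div_one] at hd
              calc q x ^ (1-s) * (Real.log (1/q x) - c/2)^2
                  ≤ Real.exp (-(Real.log (1/q x))) * (Real.log (1/q x) - c/2)^2 :=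
                    mul_le_mul_of_nonneg_right (hpt0 x h1) (sq_nonneg _)
                _ = (Real.log (1/q x) - c/2)^2 * Real.exp (-(Real.log (1/q x))) := by ring
                _ ≤ 4/1*Real.exp (-2)*Real.exp (-(1*c/2)) := by
                    have : -(1*(Real.log (1/q x))) = -(Real.log (1/q x)) := by ring
                    calc (Real.log (1/q x) - c/2)^2 * Real.exp (-(Real.log (1/q x)))
                        = (Real.log (1/q x) - c/2)^2 * Real.exp (-(1*(Real.log (1/q x)))) := by
                          rw [this]
                      _ ≤ 4/1^2*Real.exp (-2)*Real.exp (-(1*c/2)) :=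
                          decay2 one_pos (by linarith)
                      _ = 4/1*Real.exp (-2)*Real.exp (-(1*c/2)) := by norm_num
                _ = 4*Real.exp (-2)*Real.exp (-(c/2)) := by norm_num
            · have hmexp : m * Real.exp (-(c/2)) = Real.exp (c/2) - 3*Real.exp (-(c/2)) := by
                have h3 : m = Real.exp c - 3 := by rw [hec]; ring
                rw [h3, sub_mul]
                congr 1
                rw [← Real.exp_add]; congr 1; ring
              have hbr := bracket hcb hU
              have hKb : m*(4*Real.exp (-2)*Real.exp (-(c/2))) ≤ 0.5963475*a^2 := by
                have heq : m*(4*Real.exp (-2)*Real.exp (-(c/2)))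
                    = 4*Real.exp (-2)*(m*Real.exp (-(c/2))) := by ring
                rw [heq, hmexp]
                have h4e : 4*Real.exp (-2) ≤ 4*0.1353353 := by linarith [eneg2]
                have h5 := mul_le_mul h4e hbr hbr0 (by norm_num : (0:ℝ) ≤ 4*0.1353353)
                linarith
              exact budget hinv hNhalf ha hac hKb
          rcases le_or_gt c 2.3 with h23 | h23
          · apply hintB 1.6 2.3 3.1582 (by norm_num) h16 h23 ?_ (by norm_num)
            have : (2.3:ℝ)/2 = 1.15 := by norm_num
            rw [this]; exact e115
          rcases le_or_gt c 3.2 with h32 | h32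
          · apply hintB 2.3 3.2 4.9531 (by norm_num) (le_of_lt h23) h32 ?_ (by norm_num)
            have : (3.2:ℝ)/2 = 1.6 := by norm_num
            rw [this]; exact e16
          · apply hintB 3.2 4 7.3891 (by norm_num) (le_of_lt h32) (le_of_lt hc4'') ?_ (by norm_num)
            have : (4:ℝ)/2 = 2 := by norm_num
            rw [this]; exact e2
    · -- 0 < s
      have hN1 : 1 ≤ N := by
        rw [← hq1, hN]
        apply Finset.sum_le_sum
        intro x _
        by_cases h : 0 < q x
        · rw [if_pos h]
          have h2 := Real.rpow_le_rpow_of_exponent_ge h (hq1' x) (by linarith : 1-s ≤ 1)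
          rwa [Real.rpow_one] at h2
        · rw [if_neg h]
          have : q x = 0 := le_antisymm (not_lt.1 h) (hq0 x)
          simp [this]
      set g : ℝ := 1 - l/c with hgdef
      have hg0 : 0 < g := by
        rw [hgdef, sub_pos, div_lt_one hc0]; exact hlc
      have hgc : g * c = c - l := by
        rw [hgdef]; field_simp
      have hptD : ∀ x, 0 < q x → q x < Real.exp (-c) →
          q x ^ (1-s) * (Real.log (1/q x) - c/2)^2
            ≤ (Real.log (1/q x) - c/2)^2 * Real.exp (-(g * Real.log (1/q x))) := by
        intro x h1 h2
        have hsplitpow : q x^(1-s) = q x^(l/c-s) * q x^g := by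
          rw [← Real.rpow_add h1]; congr 1; rw [hgdef]; ring
        have hqeps : q x^(l/c-s) ≤ 1 := by
          apply Real.rpow_le_one (hq0 x) (hq1' x)
          have : 0 < l/c := by positivity
          linarith
        have hqγ : q x^g = Real.exp (-(g * Real.log (1/q x))) := by
          rw [Real.rpow_def_of_pos h1, hσ]; ring_nf
        rw [hsplitpow, hqγ]
        have hE0 : (0:ℝ) ≤ Real.exp (-(g * Real.log (1/q x))) := (Real.exp_pos _).le
        calc q x^(l/c-s) * Real.exp (-(g * Real.log (1/q x))) * (Real.log (1/q x) - c/2)^2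
            ≤ 1 * Real.exp (-(g * Real.log (1/q x))) * (Real.log (1/q x) - c/2)^2 := by
              apply mul_le_mul_of_nonneg_right _ (sq_nonneg _)
              exact mul_le_mul_of_nonneg_right hqeps hE0
          _ = (Real.log (1/q x) - c/2)^2 * Real.exp (-(g * Real.log (1/q x))) := by ring
      rcases le_or_gt (4+l) c with hc4l | hc4l
      · -- c ≥ 4 + l
        apply le_trans (hSSle ((c/2)^2 * Real.exp (-(g*c))) (by positivity) ?_) ?_
        · intro x h1 h2
          have hσx := hσc x h1 h2
          calc q x ^ (1-s) * (Real.log (1/q x) - c/2)^2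
              ≤ (Real.log (1/q x) - c/2)^2 * Real.exp (-(g * Real.log (1/q x))) :=
                hptD x h1 h2
            _ ≤ (c/2)^2 * Real.exp (-(g*c)) := by
                apply decay1 (le_of_lt hc0) (le_of_lt hg0) _ hσx
                rw [hgc]; linarith
        · have hKb : m * ((c/2)^2 * Real.exp (-(g*c))) ≤ c^2/2 := by
            have hexpg : Real.exp (-(g*c)) = 2 * Real.exp (-c) := by
              rw [hgc, show -(c-l) = l + -c by ring, Real.exp_add, hldef,
                Real.exp_log (by norm_num : (0:ℝ) < 2)]
            rw [hexpg]
            have heq : m * ((c/2)^2 * (2*Real.exp (-c))) = ((c/2)^2 * 2) * (m * Real.exp (-c)) := by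
              ring
            rw [heq]
            have h1 := mul_le_of_le_one_right (by positivity : (0:ℝ) ≤ (c/2)^2*2) hme
            have h2 : (c/2)^2*2 = c^2/2 := by ring
            linarith
          exact budget2 hinv hN1 (sq_nonneg c) hKb
      · -- c < 4 + l
        by_cases hm2 : m < 2
        · rw [hm1case hm2]; exact hRHS0
        · push_neg at hm2
          have hc5 : Real.log 5 ≤ c := Real.log_le_log (by norm_num) (by linarith)
          have h16 : (1.6:ℝ) ≤ c := le_trans elog5 hc5
          have hbr0 : 0 ≤ Real.exp (c/2) - 3*Real.exp (-(c/2)) := by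
            have e1 : 1 + c/2 ≤ Real.exp (c/2) := by
              have := Real.add_one_le_exp (c/2); linarith
            have e2 : Real.exp (-(c/2)) * Real.exp (c/2) = 1 := by
              rw [← Real.exp_add]; simp
            nlinarith [Real.exp_pos (-(c/2))]
          have hel2 : Real.exp (l/2) ≤ 1.4142137 := by
            calc Real.exp (l/2) ≤ Real.exp 0.3465736 := by
                  rw [Real.exp_le_exp]; linarith
              _ ≤ 1.4142137 := (exp_le_poly (by norm_num) (by norm_num)).trans (by norm_num)
          have hmexp : m * Real.exp (-(c/2)) = Real.exp (c/2) - 3*Real.exp (-(c/2)) := by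
            have h3 : m = Real.exp c - 3 := by rw [hec]; ring
            rw [h3, sub_mul]
            congr 1
            rw [← Real.exp_add]; congr 1; ring
          have hcl0 : (0:ℝ) < c - l := by linarith
          have hintD : ∀ a b U : ℝ, 0.6931471808 ≤ a → a ≤ c → c ≤ b → Real.exp (b/2) ≤ U →
              4*0.1353353*1.4142137*(U - 3/U) ≤ 1.1926950*(a-0.6931471808)^2 →
              (∑ x, (if 0 < q x ∧ q x < Real.exp (-c) then
                q x ^ (1-s) * (Real.log (1 / q x) - c / 2) ^ 2 else 0))
                ≤ (1/l - 1/4)*c^2*N := by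
            intro a b U ha hac hcb hU hnum
            apply le_trans (hSSle (4/g^2*Real.exp (-2)*Real.exp (-(g*c/2))) (by positivity) ?_) ?_
            · intro x h1 h2
              have hσx := hσc x h1 h2
              calc q x ^ (1-s) * (Real.log (1/q x) - c/2)^2
                  ≤ (Real.log (1/q x) - c/2)^2 * Real.exp (-(g * Real.log (1/q x))) :=
                    hptD x h1 h2
                _ ≤ 4/g^2*Real.exp (-2)*Real.exp (-(g*c/2)) :=
                    decay2 hg0 (by linarith)
            · -- m * K ≤ (1/l - 1/4) c^2 N
              have hbr := bracket hcb hU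
              -- A := 4 exp(-2) exp(l/2) * BR
              have hgsq : g^2 = (c-l)^2/c^2 := by
                have : g = (c-l)/c := by rw [hgdef]; field_simp
                rw [this, div_pow]
              have hexpsplit : Real.exp (-(g*c/2)) = Real.exp (l/2) * Real.exp (-(c/2)) := by
                rw [← Real.exp_add]
                congr 1
                rw [show g*c/2 = (g*c)/2 by ring, hgc]; ring
              have hKeq : m * (4/g^2*Real.exp (-2)*Real.exp (-(g*c/2)))
                  = (4*Real.exp (-2)*Real.exp (l/2)*(Real.exp (c/2) - 3*Real.exp (-(c/2))))
                    * (c^2/(c-l)^2) := by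
                rw [hexpsplit, hgsq, ← hmexp]
                field_simp
              rw [hKeq]
              have hA : 4*Real.exp (-2)*Real.exp (l/2)*(Real.exp (c/2) - 3*Real.exp (-(c/2)))
                  ≤ 1.1926950*(a-0.6931471808)^2 := by
                have h4e : 4*Real.exp (-2)*Real.exp (l/2) ≤ 4*0.1353353*1.4142137 := by
                  have h6 : 4*Real.exp (-2) ≤ 4*0.1353353 := by linarith [eneg2]
                  have h7 := mul_le_mul h6 hel2 (Real.exp_pos (l/2)).le
                    (by norm_num : (0:ℝ) ≤ 4*0.1353353)
                  linarith
                have h4e0 : (0:ℝ) ≤ 4*Real.exp (-2)*Real.exp (l/2) := by positivity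
                have h5 := mul_le_mul h4e hbr hbr0 (by norm_num : (0:ℝ) ≤ 4*0.1353353*1.4142137)
                linarith
              have hclal : a - 0.6931471808 ≤ c - l := by linarith
              have hclal0 : (0:ℝ) ≤ a - 0.6931471808 := by linarith
              have hsq2 : (a-0.6931471808)^2 ≤ (c-l)^2 := by
                exact pow_le_pow_left₀ hclal0 hclal 2
              have hAfin : 4*Real.exp (-2)*Real.exp (l/2)*(Real.exp (c/2) - 3*Real.exp (-(c/2)))
                  ≤ (1/l - 1/4)*(c-l)^2 := by
                have h7 : (1.1926950:ℝ) ≤ 1/l - 1/4 := by linarith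
                have h8 := mul_le_mul h7 hsq2 (sq_nonneg _) (by linarith : (0:ℝ) ≤ 1/l - 1/4)
                linarith
              -- conclude
              have hdiv : (4*Real.exp (-2)*Real.exp (l/2)*(Real.exp (c/2) - 3*Real.exp (-(c/2))))
                    * (c^2/(c-l)^2) ≤ (1/l - 1/4)*c^2 := by
                rw [mul_div_assoc'] -- ?
                rw [div_le_iff₀ (by positivity : (0:ℝ) < (c-l)^2)]
                calc 4*Real.exp (-2)*Real.exp (l/2)*(Real.exp (c/2) - 3*Real.exp (-(c/2))) * c^2
                    ≤ ((1/l - 1/4)*(c-l)^2) * c^2 :=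
                      mul_le_mul_of_nonneg_right hAfin (sq_nonneg c)
                  _ = (1/l-1/4)*c^2*(c-l)^2 := by ring
              calc (4*Real.exp (-2)*Real.exp (l/2)*(Real.exp (c/2) - 3*Real.exp (-(c/2))))
                    * (c^2/(c-l)^2) ≤ (1/l - 1/4)*c^2 := hdiv
                _ = (1/l-1/4)*c^2*1 := by ring
                _ ≤ (1/l-1/4)*c^2*N := by
                    apply mul_le_mul_of_nonneg_left hN1
                    exact mul_nonneg (by linarith) (sq_nonneg c)
          rcases le_or_gt c 1.8 with hI | hI
          · apply hintD 1.6 1.8 2.4597 (by norm_num) h16 hI ?_ (by norm_num)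
            have : (1.8:ℝ)/2 = 0.9 := by norm_num
            rw [this]; exact e09
          rcases le_or_gt c 2.05 with hI2 | hI2
          · apply hintD 1.8 2.05 2.7871 (by norm_num) (le_of_lt hI) hI2 ?_ (by norm_num)
            have : (2.05:ℝ)/2 = 1.025 := by norm_num
            rw [this]; exact e1025
          rcases le_or_gt c 2.4 with hI3 | hI3
          · apply hintD 2.05 2.4 3.3202 (by norm_num) (le_of_lt hI2) hI3 ?_ (by norm_num)
            have : (2.4:ℝ)/2 = 1.2 := by norm_num
            rw [this]; exact e12
          rcases le_or_gt c 2.85 with hI4 | hI4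
          · apply hintD 2.4 2.85 4.1579 (by norm_num) (le_of_lt hI3) hI4 ?_ (by norm_num)
            have : (2.85:ℝ)/2 = 1.425 := by norm_num
            rw [this]; exact e1425
          rcases le_or_gt c 3.4 with hI5 | hI5
          · apply hintD 2.85 3.4 5.4740 (by norm_num) (le_of_lt hI4) hI5 ?_ (by norm_num)
            have : (3.4:ℝ)/2 = 1.7 := by norm_num
            rw [this]; exact e17
          rcases le_or_gt c 4.1 with hI6 | hI6
          · apply hintD 3.4 4.1 7.7680 (by norm_num) (le_of_lt hI5) hI6 ?_ (by norm_num)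
            have : (4.1:ℝ)/2 = 2.05 := by norm_num
            rw [this]; exact e205
          · apply hintD 4.1 4.7 10.4856 (by norm_num) (le_of_lt hI6) (by linarith) ?_ (by norm_num)
            have : (4.7:ℝ)/2 = 2.35 := by norm_num
            rw [this]; exact e235
  calc ∑ x, (if 0 < q x then q x ^ (1-s) * (Real.log (1 / q x) - c / 2) ^ 2 else 0)
      ≤ c^2/4 * N + (1/l - 1/4) * c^2 * N := by rw [hsplit]; exact add_le_add hbig hsmall
    _ = c^2/l * N := by ring


theorem main_thm
    {X Y : Type*} [Fintype X] [Fintype Y] [Nonempty X] [Nonempty Y]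
    (P : X × Y → ℝ) (hP0 : ∀ p, 0 ≤ P p) (hP1 : ∑ p : X × Y, P p = 1)
    (n : ℕ) (hn : 1 ≤ n)
    (δ : ℝ) (hδ0 : 0 ≤ δ) (hδ : δ ≤ Real.logb 2 (Fintype.card X)) :
    (∑ p : (Fin n → X) × (Fin n → Y),
        if 0 < (∏ i, P (p.1 i, p.2 i)) ∧
            (n : ℝ) * (condEnt P + δ) ≤
              -∑ i, Real.logb 2 (P (p.1 i, p.2 i) / ∑ x : X, P (x, p.2 i))
          then ∏ i, P (p.1 i, p.2 i) else 0)
      ≤ 2 ^ (-((n : ℝ) * δ ^ 2) / (2 * (Real.logb 2 (Fintype.card X + 3)) ^ 2)) ∧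
    (∑ p : (Fin n → X) × (Fin n → Y),
        if 0 < (∏ i, P (p.1 i, p.2 i)) ∧
            (-∑ i, Real.logb 2 (P (p.1 i, p.2 i) / ∑ x : X, P (x, p.2 i))) ≤
              (n : ℝ) * (condEnt P - δ)
          then ∏ i, P (p.1 i, p.2 i) else 0)
      ≤ 2 ^ (-((n : ℝ) * δ ^ 2) / (2 * (Real.logb 2 (Fintype.card X + 3)) ^ 2)) := by
  classical
  have hl0 : (0:ℝ) < Real.log 2 := Real.log_pos one_lt_two
  set l : ℝ := Real.log 2 with hldef
  have hm1 : (1:ℝ) ≤ (Fintype.card X : ℝ) := by exact_mod_cast Fintype.card_pos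
  set m : ℝ := (Fintype.card X : ℝ) with hm
  set c : ℝ := Real.log (m + 3) with hcdef
  have hc0 : (0:ℝ) < c := Real.log_pos (by linarith)
  have hml : Real.log m ≤ c := by
    rcases eq_or_lt_of_le hm1 with h|h
    · rw [← h]; simp; positivity
    · exact Real.log_le_log (by linarith) (by linarith)
  have hmlog0 : 0 ≤ Real.log m := Real.log_nonneg hm1
  have hlc : l < c := by
    have h1 : Real.log 2 < Real.log 4 := Real.log_lt_log (by norm_num) (by norm_num)
    have h2 : Real.log 4 ≤ c := Real.log_le_log (by norm_num) (by linarith)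
    linarith
  set H : ℝ := condEnt P with hH
  have hδn : l * δ ≤ c := by
    have h1 : Real.logb 2 m = Real.log m / l := by rw [Real.logb]
    rw [hm] at h1
    have h2 : δ ≤ Real.log m / l := by rw [← h1]; exact_mod_cast hδ
    have h3 : l * δ ≤ l * (Real.log m / l) := mul_le_mul_of_nonneg_left h2 hl0.le
    have h4 : l * (Real.log m / l) = Real.log m := by field_simp
    linarith
  set PY : Y → ℝ := fun y => ∑ x, P (x, y) with hPY
  have hPYdef : ∀ y, PY y = ∑ x, P (x, y) := fun y => rfl
  have hPY0 : ∀ y, 0 ≤ PY y := fun y => Finset.sum_nonneg fun x _ => hP0 _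
  have hPle : ∀ p : X × Y, 0 < P p → P p ≤ PY p.2 := by
    intro p hp
    have h1 : P (p.1, p.2) ≤ ∑ x, P (x, p.2) :=
      Finset.single_le_sum (f := fun x => P (x, p.2)) (fun i _ => hP0 _) (mem_univ p.1)
    simpa [hPYdef] using h1
  have hPYpos : ∀ p : X × Y, 0 < P p → 0 < PY p.2 := fun p hp => lt_of_lt_of_le hp (hPle p hp)
  set L : X × Y → ℝ := fun p => Real.log (PY p.2 / P p) with hLdef
  have hLform : ∀ p : X × Y, 0 < P p → L p = Real.log (PY p.2) - Real.log (P p) := by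
    intro p hp
    rw [hLdef]
    exact Real.log_div (hPYpos p hp).ne' hp.ne'
  set Supp : Finset (X × Y) := univ.filter (fun p => 0 < P p) with hSupp
  set S : ℝ → ℝ := fun t => ∑ p ∈ Supp, P p * Real.exp (t * L p) with hS
  set S1 : ℝ → ℝ := fun t => ∑ p ∈ Supp, P p * (L p * Real.exp (t * L p)) with hS1
  set S2 : ℝ → ℝ := fun t => ∑ p ∈ Supp, P p * (L p^2 * Real.exp (t * L p)) with hS2
  have hex : ∃ p : X × Y, 0 < P p := by
    by_contra h
    push_neg at h
    have h1 : ∑ p : X × Y, P p ≤ 0 := Finset.sum_nonpos (fun p _ => h p)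
    rw [hP1] at h1
    norm_num at h1
  have hSpos : ∀ t, 0 < S t := by
    intro t
    obtain ⟨p₀, hp₀⟩ := hex
    rw [hS]
    apply Finset.sum_pos'
    · intro p _
      exact mul_nonneg (hP0 p) (Real.exp_pos _).le
    · refine ⟨p₀, ?_, ?_⟩
      · rw [hSupp, Finset.mem_filter]; exact ⟨mem_univ _, hp₀⟩
      · exact mul_pos hp₀ (Real.exp_pos _)
  have hS0 : S 0 = 1 := by
    rw [hS]
    simp only [zero_mul, Real.exp_zero, mul_one]
    rw [hSupp, Finset.sum_filter]
    rw [← hP1]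
    apply Finset.sum_congr rfl
    intro p _
    by_cases h : 0 < P p
    · simp [h]
    · simp [h, le_antisymm (not_lt.1 h) (hP0 p)]
  have hS10 : S1 0 = l * H := by
    rw [hS1, hH]
    simp only [zero_mul, Real.exp_zero, mul_one]
    rw [hSupp, Finset.sum_filter, condEnt, Finset.mul_sum]
    apply Finset.sum_congr rfl
    intro p _
    by_cases h : 0 < P p
    · rw [if_pos h, if_pos h]
      have : Real.logb 2 ((∑ x : X, P (x, p.2)) / P p) = L p / l := by
        rw [Real.logb, hLdef, ← hPYdef]
      rw [this]
      field_simp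
    · simp [h]
  have hder : ∀ t, HasDerivAt S (S1 t) t := by
    intro t
    rw [hS1]
    have : S = fun u => ∑ p ∈ Supp, P p * Real.exp (u * L p) := hS
    rw [this]
    apply HasDerivAt.fun_sum
    intro p _
    have h1 : HasDerivAt (fun u : ℝ => u * L p) (L p) t := by
      simpa using (hasDerivAt_id t).mul_const (L p)
    have h2 := h1.exp
    have h3 := h2.const_mul (P p)
    refine h3.congr_deriv ?_
    ring
  have hder1 : ∀ t, HasDerivAt S1 (S2 t) t := by
    intro t
    rw [hS2]
    have : S1 = fun u => ∑ p ∈ Supp, P p * (L p * Real.exp (u * L p)) := hS1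
    rw [this]
    apply HasDerivAt.fun_sum
    intro p _
    have h1 : HasDerivAt (fun u : ℝ => u * L p) (L p) t := by
      simpa using (hasDerivAt_id t).mul_const (L p)
    have h2 := (h1.exp.const_mul (L p)).const_mul (P p)
    refine h2.congr_deriv ?_
    ring
  -- variance bound
  have hvar : ∀ t, |t| ≤ l / c → S2 t * S t - S1 t^2 ≤ c^2/l * S t^2 := by
    intro t ht
    have hTbident : (∑ p ∈ Supp, P p * ((L p - c/2)^2 * Real.exp (t * L p)))
        = S2 t - c * S1 t + (c/2)^2 * S t := by
      rw [hS2, hS1, hS, Finset.mul_sum, Finset.mul_sum, ← Finset.sum_sub_distrib,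
        ← Finset.sum_add_distrib]
      apply Finset.sum_congr rfl
      intro p _
      ring
    have hTbS : (∑ p ∈ Supp, P p * ((L p - c/2)^2 * Real.exp (t * L p))) ≤ c^2/l * S t := by
      have hTb2 : (∑ p ∈ Supp, P p * ((L p - c/2)^2 * Real.exp (t * L p)))
          = ∑ y : Y, ∑ x : X, (if 0 < P (x,y) then
              P (x,y) * ((L (x,y) - c/2)^2 * Real.exp (t * L (x,y))) else 0) := by
        rw [hSupp, Finset.sum_filter, Fintype.sum_prod_type_right]
      have hSt2 : S t = ∑ y : Y, ∑ x : X, (if 0 < P (x,y) then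
          P (x,y) * Real.exp (t * L (x,y)) else 0) := by
        simp only [hS, hSupp, Finset.sum_filter]
        rw [Fintype.sum_prod_type_right]
      rw [hTb2, hSt2, Finset.mul_sum]
      apply Finset.sum_le_sum
      intro y _
      by_cases hy : 0 < PY y
      · -- apply core
        have hcore := core (X := X) (fun x => P (x,y) / PY y)
          (fun x => div_nonneg (hP0 _) hy.le)
          (by rw [← Finset.sum_div, ← hPYdef]; field_simp) t
          (by rw [← hm, ← hcdef, ← hldef]; exact ht)
        rw [← hm, ← hcdef, ← hldef] at hcore
        have hmul := mul_le_mul_of_nonneg_left hcore hy.le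
        have hqiff : ∀ x, (0 < P (x,y) / PY y) ↔ 0 < P (x,y) := by
          intro x
          constructor
          · intro h
            by_contra h2
            have : P (x,y) = 0 := le_antisymm (not_lt.1 h2) (hP0 _)
            rw [this, zero_div] at h
            exact lt_irrefl 0 h
          · intro h; exact div_pos h hy
        have hABq : ∀ x, 0 < P (x,y) →
            (PY y * ((P (x,y)/PY y)^(1-t) * (Real.log (1/(P (x,y)/PY y)) - c/2)^2)
              = P (x,y) * ((L (x,y) - c/2)^2 * Real.exp (t * L (x,y))))
            ∧ PY y * (P (x,y)/PY y)^(1-t) = P (x,y) * Real.exp (t * L (x,y)) := by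
          intro x hp
          have hqpos : 0 < P (x,y)/PY y := div_pos hp hy
          have hBid : Real.log (1/(P (x,y)/PY y)) = L (x,y) := by
            rw [one_div_div, hLdef]
          have hAid : PY y * (P (x,y)/PY y)^(1-t) = P (x,y) * Real.exp (t * L (x,y)) := by
            have h1 : (P (x,y)/PY y)^(1-t) = (P (x,y)/PY y) * (P (x,y)/PY y)^(-t) := by
              rw [show (1:ℝ)-t = 1 + (-t) by ring, Real.rpow_add hqpos, Real.rpow_one]
            have h2 : (P (x,y)/PY y)^(-t:ℝ) = Real.exp (t * L (x,y)) := by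
              rw [Real.rpow_def_of_pos hqpos]
              congr 1
              rw [Real.log_div hp.ne' hy.ne', hLform (x,y) hp]
              ring
            rw [h1, h2]
            field_simp
          constructor
          · rw [hBid]
            linear_combination (L (x,y) - c/2)^2 * hAid
          · exact hAid
        calc (∑ x : X, (if 0 < P (x,y) then
              P (x,y) * ((L (x,y) - c/2)^2 * Real.exp (t * L (x,y))) else 0))
            = PY y * ∑ x : X, (if 0 < P (x,y)/PY y then
                (P (x,y)/PY y)^(1-t) * (Real.log (1/(P (x,y)/PY y)) - c/2)^2 else 0) := by
              rw [Finset.mul_sum]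
              apply Finset.sum_congr rfl
              intro x _
              by_cases h : 0 < P (x,y)
              · rw [if_pos h, if_pos ((hqiff x).2 h), ← (hABq x h).1]
              · rw [if_neg h, if_neg (fun h2 => h ((hqiff x).1 h2)), mul_zero]
          _ ≤ PY y * (c^2/l * ∑ x : X, (if 0 < P (x,y)/PY y then (P (x,y)/PY y)^(1-t) else 0)) :=
              hmul
          _ = c^2/l * ∑ x : X, (if 0 < P (x,y) then P (x,y) * Real.exp (t * L (x,y)) else 0) := by
              rw [Finset.mul_sum, Finset.mul_sum, Finset.mul_sum]
              apply Finset.sum_congr rfl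
              intro x _
              by_cases h : 0 < P (x,y)
              · rw [if_pos h, if_pos ((hqiff x).2 h)]
                rw [show PY y * (c^2/l * (P (x,y)/PY y)^(1-t))
                    = c^2/l * (PY y * (P (x,y)/PY y)^(1-t)) by ring, (hABq x h).2]
              · rw [if_neg h, if_neg (fun h2 => h ((hqiff x).1 h2)), mul_zero, mul_zero]
      · -- PY y = 0
        have hy0 : PY y = 0 := le_antisymm (not_lt.1 hy) (hPY0 y)
        have hz : ∀ x : X, ¬ (0 < P (x,y)) := by
          intro x hpos
          have h2 : (0:ℝ) < PY y := hPYpos (x,y) hpos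
          linarith
        have hL0 : (∑ x : X, (if 0 < P (x,y) then
            P (x,y) * ((L (x,y) - c/2)^2 * Real.exp (t * L (x,y))) else 0)) = 0 :=
          Finset.sum_eq_zero (fun x _ => if_neg (hz x))
        have hR0 : (∑ x : X, (if 0 < P (x,y) then P (x,y) * Real.exp (t * L (x,y)) else 0)) = 0 :=
          Finset.sum_eq_zero (fun x _ => if_neg (hz x))
        rw [hL0, hR0, mul_zero]
    -- combine
    have hsq := sq_nonneg (S1 t - c/2 * S t)
    have hSt := hSpos t
    nlinarith [hTbident, mul_le_mul_of_nonneg_right hTbS hSt.le]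
  -- per-letter MGF bound
  have hkey : ∀ t : ℝ, |t| ≤ l/c → Real.log (S t) ≤ t * (l*H) + (c^2/l) * t^2 / 2 := by
    intro t ht
    set φ : ℝ → ℝ := fun u => Real.log (S u) - u*(l*H) - (c^2/l)*u^2/2 with hφ
    set φ1 : ℝ → ℝ := fun u => S1 u / S u - l*H - (c^2/l)*u with hφ1
    have hdφ : ∀ u, HasDerivAt φ (φ1 u) u := by
      intro u
      rw [hφ, hφ1]
      have h1 := (hder u).log (hSpos u).ne'
      have h2 : HasDerivAt (fun v : ℝ => v*(l*H)) (l*H) u := by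
        simpa using (hasDerivAt_id u).mul_const (l*H)
      have h3 : HasDerivAt (fun v : ℝ => (c^2/l)*v^2/2) ((c^2/l)*u) u := by
        have h4 := ((hasDerivAt_pow 2 u).const_mul (c^2/l)).div_const 2
        refine h4.congr_deriv ?_
        push_cast
        ring
      exact (h1.sub h2).sub h3
    have hdφ1 : ∀ u, HasDerivAt φ1 ((S2 u * S u - S1 u^2)/S u^2 - c^2/l) u := by
      intro u
      have heq : φ1 = fun v => S1 v / S v - (l*H + (c^2/l)*v) := by
        rw [hφ1]; funext v; ring
      rw [heq]
      have h1 := (hder1 u).div (hder u) (hSpos u).ne'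
      have h2 : HasDerivAt (fun v : ℝ => l*H + (c^2/l)*v) (c^2/l) u := by
        have h5 : HasDerivAt (fun v : ℝ => (c^2/l)*v) (c^2/l) u := by
          simpa using (hasDerivAt_id u).const_mul (c^2/l)
        simpa using h5.const_add (l*H)
      have h5 := h1.sub h2
      refine h5.congr_deriv ?_
      ring
    have hφ0 : φ 0 = 0 := by rw [hφ]; simp [hS0]
    have hφ10 : φ1 0 = 0 := by
      rw [hφ1]; simp only [hS0, hS10]; field_simp; ring
    have hderiv2 : ∀ u, u ∈ Set.Icc (-(l/c)) (l/c) → (S2 u * S u - S1 u^2)/S u^2 - c^2/l ≤ 0 := by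
      intro u hu
      have h6 := hvar u (abs_le.2 ⟨hu.1, hu.2⟩)
      have h7 : (0:ℝ) < S u^2 := pow_pos (hSpos u) 2
      rw [sub_nonpos, div_le_iff₀ h7]
      calc S2 u * S u - S1 u^2 ≤ c^2/l * S u^2 := h6
        _ = c^2/l * S u^2 := rfl
    rcases abs_le.1 ht with ⟨htl, htr⟩
    have hφcont : Continuous φ := by
      have h8 : ∀ u, DifferentiableAt ℝ φ u := fun u => (hdφ u).differentiableAt
      exact Differentiable.continuous h8
    have hφ1cont : Continuous φ1 := by
      have h8 : ∀ u, DifferentiableAt ℝ φ1 u := fun u => (hdφ1 u).differentiableAt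
      exact Differentiable.continuous h8
    rcases le_or_gt 0 t with h0t | h0t
    · have hsub : Set.Icc (0:ℝ) t ⊆ Set.Icc (-(l/c)) (l/c) := by
        intro u hu
        constructor
        · have := hu.1
          have h9 : (0:ℝ) ≤ l/c := by positivity
          linarith [hu.1]
        · linarith [hu.2]
      have hc1 : AntitoneOn φ1 (Set.Icc 0 t) := by
        apply antitoneOn_of_deriv_nonpos (convex_Icc 0 t) hφ1cont.continuousOn
        · intro u _
          exact (hdφ1 u).differentiableAt.differentiableWithinAt
        · intro u hu
          rw [(hdφ1 u).deriv]
          exact hderiv2 u (hsub (interior_subset hu))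
      have hφ1le : ∀ u ∈ Set.Icc (0:ℝ) t, φ1 u ≤ 0 := by
        intro u hu
        have h10 := hc1 (Set.left_mem_Icc.2 h0t) hu hu.1
        rwa [hφ10] at h10
      have hc2 : AntitoneOn φ (Set.Icc 0 t) := by
        apply antitoneOn_of_deriv_nonpos (convex_Icc 0 t) hφcont.continuousOn
        · intro u _
          exact (hdφ u).differentiableAt.differentiableWithinAt
        · intro u hu
          rw [(hdφ u).deriv]
          exact hφ1le u (interior_subset hu)
      have h11 := hc2 (Set.left_mem_Icc.2 h0t) (Set.right_mem_Icc.2 h0t) h0t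
      rw [hφ0] at h11
      have h12 : Real.log (S t) - t*(l*H) - (c^2/l)*t^2/2 ≤ 0 := h11
      linarith
    · have hsub : Set.Icc t (0:ℝ) ⊆ Set.Icc (-(l/c)) (l/c) := by
        intro u hu
        constructor
        · linarith [hu.1]
        · have h9 : (0:ℝ) ≤ l/c := by positivity
          linarith [hu.2]
      have hc1 : AntitoneOn φ1 (Set.Icc t 0) := by
        apply antitoneOn_of_deriv_nonpos (convex_Icc t 0) hφ1cont.continuousOn
        · intro u _
          exact (hdφ1 u).differentiableAt.differentiableWithinAt
        · intro u hu
          rw [(hdφ1 u).deriv]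
          exact hderiv2 u (hsub (interior_subset hu))
      have hφ1ge : ∀ u ∈ Set.Icc t (0:ℝ), 0 ≤ φ1 u := by
        intro u hu
        have h10 := hc1 hu (Set.right_mem_Icc.2 h0t.le) hu.2
        rwa [hφ10] at h10
      have hc2 : MonotoneOn φ (Set.Icc t 0) := by
        apply monotoneOn_of_deriv_nonneg (convex_Icc t 0) hφcont.continuousOn
        · intro u _
          exact (hdφ u).differentiableAt.differentiableWithinAt
        · intro u hu
          rw [(hdφ u).deriv]
          exact hφ1ge u (interior_subset hu)
      have h11 := hc2 (Set.left_mem_Icc.2 h0t.le) (Set.right_mem_Icc.2 h0t.le) h0t.le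
      rw [hφ0] at h11
      have h12 : Real.log (S t) - t*(l*H) - (c^2/l)*t^2/2 ≤ 0 := h11
      linarith
  -- nonnegativity of weights
  have hw0 : ∀ (t : ℝ) (z : X × Y), 0 ≤ (if 0 < P z then P z * Real.exp (t * L z) else 0) := by
    intro t z
    by_cases h : 0 < P z
    · rw [if_pos h]; positivity
    · rw [if_neg h]
  -- tensorization
  have htensor : ∀ t : ℝ,
      (∑ p : (Fin n → X) × (Fin n → Y), ∏ i, (if 0 < P (p.1 i, p.2 i) then
        P (p.1 i, p.2 i) * Real.exp (t * L (p.1 i, p.2 i)) else 0)) = S t ^ n := by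
    intro t
    rw [← Fintype.sum_equiv (Equiv.arrowProdEquivProdArrow (Fin n) (fun _ => X) (fun _ => Y))
        (fun g : Fin n → X × Y => ∏ i, (if 0 < P (g i) then
          P (g i) * Real.exp (t * L (g i)) else 0))
        (fun p : (Fin n → X) × (Fin n → Y) => ∏ i, (if 0 < P (p.1 i, p.2 i) then
          P (p.1 i, p.2 i) * Real.exp (t * L (p.1 i, p.2 i)) else 0))
        (fun g => rfl)]
    have h2 : S t = ∑ z : X × Y, (if 0 < P z then P z * Real.exp (t * L z) else 0) := by
      simp only [hS, hSupp, Finset.sum_filter]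
    rw [h2]
    calc (∑ g : Fin n → X × Y, ∏ i, (if 0 < P (g i) then P (g i) * Real.exp (t * L (g i)) else 0))
        = ∏ _i : Fin n, ∑ z : X × Y, (if 0 < P z then P z * Real.exp (t * L z) else 0) := by
          rw [Finset.prod_univ_sum]
          rw [Fintype.piFinset_univ]
      _ = (∑ z : X × Y, (if 0 < P z then P z * Real.exp (t * L z) else 0)) ^ n := by
          rw [Finset.prod_const, Finset.card_univ, Fintype.card_fin]
  -- positivity of all coordinates
  have hPiall : ∀ p : (Fin n → X) × (Fin n → Y), 0 < (∏ i, P (p.1 i, p.2 i)) →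
      ∀ i, 0 < P (p.1 i, p.2 i) := by
    intro p hprod i
    rcases (hP0 (p.1 i, p.2 i)).lt_or_eq with h | h
    · exact h
    · exfalso
      have h2 : (∏ i, P (p.1 i, p.2 i)) = 0 := Finset.prod_eq_zero (mem_univ i) h.symm
      rw [h2] at hprod
      exact lt_irrefl 0 hprod
  -- condition translation
  have hLcond : ∀ (p : (Fin n → X) × (Fin n → Y)), (∀ i, 0 < P (p.1 i, p.2 i)) →
      -∑ i, Real.logb 2 (P (p.1 i, p.2 i) / ∑ x : X, P (x, p.2 i))
        = (∑ i, L (p.1 i, p.2 i)) / l := by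
    intro p hp
    rw [Finset.sum_div, ← Finset.sum_neg_distrib]
    apply Finset.sum_congr rfl
    intro i _
    have hpi := hp i
    have hyi : 0 < PY (p.2 i) := hPYpos _ hpi
    rw [show (∑ x : X, P (x, p.2 i)) = PY (p.2 i) from (hPYdef _).symm]
    rw [Real.logb, Real.log_div hpi.ne' hyi.ne', hLform _ hpi]
    rw [hldef]
    ring
  -- pointwise chernoff
  have hpoint : ∀ (t a : ℝ) (p : (Fin n → X) × (Fin n → Y)),
      0 < (∏ i, P (p.1 i, p.2 i)) → 0 ≤ t * ((∑ i, L (p.1 i, p.2 i)) - a) →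
      (∏ i, P (p.1 i, p.2 i)) ≤ Real.exp (-(t*a)) *
        ∏ i, (if 0 < P (p.1 i, p.2 i) then P (p.1 i, p.2 i) * Real.exp (t * L (p.1 i, p.2 i)) else 0) := by
    intro t a p hprod hta
    have hPi := hPiall p hprod
    have hw : (∏ i, (if 0 < P (p.1 i, p.2 i) then
          P (p.1 i, p.2 i) * Real.exp (t * L (p.1 i, p.2 i)) else 0))
        = (∏ i, P (p.1 i, p.2 i)) * Real.exp (t * ∑ i, L (p.1 i, p.2 i)) := by
      rw [Finset.prod_congr rfl (fun i _ => if_pos (hPi i)), Finset.prod_mul_distrib]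
      congr 1
      rw [← Real.exp_sum]
      congr 1
      rw [Finset.mul_sum]
    rw [hw]
    have hE : Real.exp (-(t*a)) * Real.exp (t * ∑ i, L (p.1 i, p.2 i))
        = Real.exp (t * ((∑ i, L (p.1 i, p.2 i)) - a)) := by
      rw [← Real.exp_add]; congr 1; ring
    have hgoal : Real.exp (-(t*a)) * ((∏ i, P (p.1 i, p.2 i)) * Real.exp (t * ∑ i, L (p.1 i, p.2 i)))
        = (∏ i, P (p.1 i, p.2 i)) * Real.exp (t * ((∑ i, L (p.1 i, p.2 i)) - a)) := by
      rw [← hE]; ring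
    rw [hgoal]
    nth_rewrite 1 [← mul_one (∏ i, P (p.1 i, p.2 i))]
    apply mul_le_mul_of_nonneg_left _ hprod.le
    have := Real.add_one_le_exp (t * ((∑ i, L (p.1 i, p.2 i)) - a))
    linarith
  -- the optimal tilt
  set t0 : ℝ := l^2*δ/c^2 with ht0
  have ht00 : 0 ≤ t0 := by rw [ht0]; positivity
  have ht0c : |t0| ≤ l/c := by
    rw [abs_of_nonneg ht00, ht0, div_le_div_iff₀ (by positivity) hc0]
    nlinarith [mul_le_mul_of_nonneg_left hδn (mul_nonneg hl0.le hc0.le)]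
  -- S^n as exp
  have hSn : ∀ t : ℝ, S t ^ n = Real.exp ((n:ℝ) * Real.log (S t)) := by
    intro t
    rw [Real.exp_nat_mul, Real.exp_log (hSpos t)]
  -- RHS as exp
  have hRHS : (2:ℝ) ^ (-((n:ℝ)*δ^2)/(2*(Real.logb 2 (m+3))^2))
      = Real.exp (-((n:ℝ)*l^3*δ^2/(2*c^2))) := by
    rw [Real.rpow_def_of_pos (by norm_num : (0:ℝ) < 2)]
    congr 1
    rw [Real.logb, ← hldef, ← hcdef]
    field_simp
  have hn0 : (0:ℝ) ≤ (n:ℝ) := Nat.cast_nonneg n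
  constructor
  · -- upper tail
    calc (∑ p : (Fin n → X) × (Fin n → Y),
        if 0 < (∏ i, P (p.1 i, p.2 i)) ∧
            (n : ℝ) * (condEnt P + δ) ≤
              -∑ i, Real.logb 2 (P (p.1 i, p.2 i) / ∑ x : X, P (x, p.2 i))
          then ∏ i, P (p.1 i, p.2 i) else 0)
        ≤ Real.exp (-(t0*(l*((n:ℝ)*(H+δ))))) * S t0 ^ n := by
          rw [← htensor t0, Finset.mul_sum]
          apply Finset.sum_le_sum
          intro p _
          by_cases hcd : 0 < (∏ i, P (p.1 i, p.2 i)) ∧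
            (n : ℝ) * (condEnt P + δ) ≤
              -∑ i, Real.logb 2 (P (p.1 i, p.2 i) / ∑ x : X, P (x, p.2 i))
          · rw [if_pos hcd]
            apply hpoint t0 (l*((n:ℝ)*(H+δ))) p hcd.1
            have h1 := hcd.2
            rw [hLcond p (hPiall p hcd.1)] at h1
            rw [← hH] at h1
            have h2 : l * ((n:ℝ)*(H+δ)) ≤ ∑ i, L (p.1 i, p.2 i) := by
              rw [mul_comm]
              exact (le_div_iff₀ hl0).1 h1
            exact mul_nonneg ht00 (by linarith)
          · rw [if_neg hcd]
            exact mul_nonneg (Real.exp_pos _).le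
              (Finset.prod_nonneg (fun i _ => hw0 t0 _))
      _ ≤ 2 ^ (-((n:ℝ)*δ^2)/(2*(Real.logb 2 (m+3))^2)) := by
          rw [hRHS, hSn, ← Real.exp_add]
          apply Real.exp_le_exp.2
          have hlog := hkey t0 ht0c
          have h3 : (n:ℝ) * Real.log (S t0) ≤ (n:ℝ)*(t0*(l*H) + (c^2/l)*t0^2/2) :=
            mul_le_mul_of_nonneg_left hlog hn0
          have harith : -(t0*(l*((n:ℝ)*(H+δ)))) + (n:ℝ)*(t0*(l*H) + (c^2/l)*t0^2/2)
              = -((n:ℝ)*l^3*δ^2/(2*c^2)) := by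
            rw [ht0]
            field_simp
            ring
          linarith
  · -- lower tail
    calc (∑ p : (Fin n → X) × (Fin n → Y),
        if 0 < (∏ i, P (p.1 i, p.2 i)) ∧
            (-∑ i, Real.logb 2 (P (p.1 i, p.2 i) / ∑ x : X, P (x, p.2 i))) ≤
              (n : ℝ) * (condEnt P - δ)
          then ∏ i, P (p.1 i, p.2 i) else 0)
        ≤ Real.exp (-((-t0)*(l*((n:ℝ)*(H-δ))))) * S (-t0) ^ n := by
          rw [← htensor (-t0), Finset.mul_sum]
          apply Finset.sum_le_sum
          intro p _
          by_cases hcd : 0 < (∏ i, P (p.1 i, p.2 i)) ∧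
            (-∑ i, Real.logb 2 (P (p.1 i, p.2 i) / ∑ x : X, P (x, p.2 i))) ≤
              (n : ℝ) * (condEnt P - δ)
          · rw [if_pos hcd]
            apply hpoint (-t0) (l*((n:ℝ)*(H-δ))) p hcd.1
            have h1 := hcd.2
            rw [hLcond p (hPiall p hcd.1)] at h1
            rw [← hH] at h1
            have h2 : (∑ i, L (p.1 i, p.2 i)) ≤ l * ((n:ℝ)*(H-δ)) := by
              rw [mul_comm]
              exact (div_le_iff₀ hl0).1 h1
            have h4 : (∑ i, L (p.1 i, p.2 i)) - l*((n:ℝ)*(H-δ)) ≤ 0 := by linarith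
            nlinarith [mul_nonneg ht00 (neg_nonneg.2 h4)]
          · rw [if_neg hcd]
            exact mul_nonneg (Real.exp_pos _).le
              (Finset.prod_nonneg (fun i _ => hw0 (-t0) _))
      _ ≤ 2 ^ (-((n:ℝ)*δ^2)/(2*(Real.logb 2 (m+3))^2)) := by
          rw [hRHS, hSn, ← Real.exp_add]
          apply Real.exp_le_exp.2
          have ht0c' : |(-t0)| ≤ l/c := by rwa [abs_neg]
          have hlog := hkey (-t0) ht0c'
          have h3 : (n:ℝ) * Real.log (S (-t0)) ≤ (n:ℝ)*((-t0)*(l*H) + (c^2/l)*(-t0)^2/2) :=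
            mul_le_mul_of_nonneg_left hlog hn0
          have harith : -((-t0)*(l*((n:ℝ)*(H-δ)))) + (n:ℝ)*((-t0)*(l*H) + (c^2/l)*(-t0)^2/2)
              = -((n:ℝ)*l^3*δ^2/(2*c^2)) := by
            rw [ht0]
            field_simp
            ring
          linarith

end CLLC

/-- Concentration of the conditional log-likelihood of i.i.d. samples around the
conditional Shannon entropy (a Chernoff-style bound / AEP). -/
theorem conditional_loglikelihood_concentration
    {X Y : Type*} [Fintype X] [Fintype Y] [Nonempty X] [Nonempty Y]
    (P : X × Y → ℝ) (hP0 : ∀ p, 0 ≤ P p) (hP1 : ∑ p : X × Y, P p = 1)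
    (n : ℕ) (hn : 1 ≤ n)
    (δ : ℝ) (hδ0 : 0 ≤ δ) (hδ : δ ≤ Real.logb 2 (Fintype.card X)) :
    (∑ p : (Fin n → X) × (Fin n → Y),
        if 0 < (∏ i, P (p.1 i, p.2 i)) ∧
            (n : ℝ) * (condEnt P + δ) ≤
              -∑ i, Real.logb 2 (P (p.1 i, p.2 i) / ∑ x : X, P (x, p.2 i))
          then ∏ i, P (p.1 i, p.2 i) else 0)
      ≤ 2 ^ (-((n : ℝ) * δ ^ 2) / (2 * (Real.logb 2 (Fintype.card X + 3)) ^ 2)) ∧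
    (∑ p : (Fin n → X) × (Fin n → Y),
        if 0 < (∏ i, P (p.1 i, p.2 i)) ∧
            (-∑ i, Real.logb 2 (P (p.1 i, p.2 i) / ∑ x : X, P (x, p.2 i))) ≤
              (n : ℝ) * (condEnt P - δ)
          then ∏ i, P (p.1 i, p.2 i) else 0)
      ≤ 2 ^ (-((n : ℝ) * δ ^ 2) / (2 * (Real.logb 2 (Fintype.card X + 3)) ^ 2)) :=
  CLLC.main_thm P hP0 hP1 n hn δ hδ0 hδ
end

section
/- Let A and B be nonempty finite types, let ρ be a PSD matrix indexed by A × B, let σ be a PSD matrix indexed by B, and let λ ≥ 0 be such that λ·(id_A ⊗ σ) − ρ is PSD. Let P be the orthogonal projector onto the column space of ρ, i.e. P is a matrix indexed by A × B with Pᴴ = P, P·P = P, P·ρ = ρ, and rank P = rank ρ. Then tr(ρ) ≤ λ · tr((id_A ⊗ σ)·P), where both traces are real (the trace of a product of PSD matrices is real and nonnegative). (Equivalently: the min-entropy of ρ relative to σ plus log₂ tr(ρ) is at most the max-entropy of ρ relative to σ.) -/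
open Matrix Kronecker
open scoped ComplexOrder

/-! Compressing `X - ρ ≥ 0` by the projector `P` gives `P (X - ρ) P ≥ 0`, whose trace is
`tr(X P) - tr ρ` by cyclicity, `P² = P` and `P ρ = ρ`. -/

theorem Matrix.trace_le_trace_mul_of_posSemidef_sub {n R : Type*} [Fintype n] [CommRing R]
    [PartialOrder R] [StarRing R] [StarOrderedRing R] {ρ X P : Matrix n n R}
    (h : (X - ρ).PosSemidef) (hPH : P.IsHermitian) (hPP : P * P = P) (hPρ : P * ρ = ρ) :
    ρ.trace ≤ (X * P).trace := by
  have hcompress := (h.conjTranspose_mul_mul_same P).trace_nonneg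
  rw [hPH.eq, trace_mul_cycle, hPP, Matrix.mul_sub, trace_sub, trace_mul_comm P X, hPρ]
    at hcompress
  exact sub_nonneg.mp hcompress

theorem min_entropy_le_max_entropy_general
    {A B : Type*} [Fintype A] [Fintype B] [DecidableEq A]
    (ρ : Matrix (A × B) (A × B) ℂ)
    (σ : Matrix B B ℂ)
    (l : ℝ)
    (hmin : (l • ((1 : Matrix A A ℂ) ⊗ₖ σ) - ρ).PosSemidef)
    (P : Matrix (A × B) (A × B) ℂ) (hPH : P.IsHermitian) (hPP : P * P = P)
    (hPρ : P * ρ = ρ) :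
    ρ.trace.re ≤ l * ((((1 : Matrix A A ℂ) ⊗ₖ σ) * P).trace).re := by
  have h := (trace_le_trace_mul_of_posSemidef_sub hmin hPH hPP hPρ).1
  rwa [Matrix.smul_mul, trace_smul, Complex.real_smul, Complex.re_ofReal_mul] at h

/-- Min-entropy cannot be larger than max-entropy: if `λ·(id_A ⊗ σ) − ρ` is PSD and
`P` is the orthogonal projector onto the column space of `ρ`, then
`tr(ρ) ≤ λ · tr((id_A ⊗ σ)·P)`. -/
theorem min_entropy_le_max_entropy
    {A B : Type*} [Fintype A] [Fintype B] [DecidableEq A] [DecidableEq B]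
    [Nonempty A] [Nonempty B]
    (ρ : Matrix (A × B) (A × B) ℂ) (hρ : ρ.PosSemidef)
    (σ : Matrix B B ℂ) (hσ : σ.PosSemidef)
    (l : ℝ) (hl : 0 ≤ l)
    (hmin : (l • ((1 : Matrix A A ℂ) ⊗ₖ σ) - ρ).PosSemidef)
    (P : Matrix (A × B) (A × B) ℂ) (hPH : P.IsHermitian) (hPP : P * P = P)
    (hPρ : P * ρ = ρ) (hrank : P.rank = ρ.rank) :
    ρ.trace.re ≤ l * ((((1 : Matrix A A ℂ) ⊗ₖ σ) * P).trace).re :=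
  min_entropy_le_max_entropy_general ρ σ l hmin P hPH hPP hPρ
end

section
/- Let A, B, C be nonempty finite types, let ρ be a PSD matrix indexed by A × B × C, let σ be a PSD matrix indexed by B × C, and let λ ≥ 0. If λ·(id_A ⊗ σ) − ρ is PSD, then λ·(id_A ⊗ σ_B) − ρ_{AB} is PSD, where σ_B and ρ_{AB} denote the partial traces of σ and ρ over C. (Strong subadditivity of the min-entropy: H_min(ρ_{ABC}|σ_{BC}) ≤ H_min(ρ_{AB}|σ_B).) -/
open Matrix Kronecker
open scoped ComplexOrder

/-! The partial trace over `C` is the sum of the compressions `M ↦ M.submatrix (·, c) (·, c)`,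
hence preserves positive semidefiniteness; being linear, it maps `λ • (1 ⊗ₖ σ) - ρ` to
`λ • (1 ⊗ₖ σ_B) - ρ_AB`. -/

namespace Matrix

variable {m n p R : Type*} [Fintype n]

def partialTraceRight [AddCommMonoid R] (M : Matrix (m × n) (m × n) R) : Matrix m m R :=
  of fun i j => ∑ k, M (i, k) (j, k)

lemma partialTraceRight_eq_sum_submatrix [AddCommMonoid R] (M : Matrix (m × n) (m × n) R) :
    M.partialTraceRight = ∑ k, M.submatrix (·, k) (·, k) := by
  ext i j
  simp [partialTraceRight, sum_apply]

lemma partialTraceRight_sub [AddCommGroup R] (M N : Matrix (m × n) (m × n) R) :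
    (M - N).partialTraceRight = M.partialTraceRight - N.partialTraceRight := by
  ext i j
  simp [partialTraceRight, Finset.sum_sub_distrib]

lemma partialTraceRight_smul {S : Type*} [AddCommMonoid R] [DistribSMul S R] (s : S)
    (M : Matrix (m × n) (m × n) R) :
    (s • M).partialTraceRight = s • M.partialTraceRight := by
  ext i j
  simp [partialTraceRight, Finset.smul_sum]

lemma partialTraceRight_submatrix_prodAssoc_kronecker [NonUnitalNonAssocSemiring R]
    (M : Matrix m m R) (N : Matrix (p × n) (p × n) R) :
    ((M ⊗ₖ N).submatrix (Equiv.prodAssoc m p n) (Equiv.prodAssoc m p n)).partialTraceRight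
      = M ⊗ₖ N.partialTraceRight := by
  ext ⟨a, b⟩ ⟨a', b'⟩
  simp [partialTraceRight, Finset.mul_sum]

lemma PosSemidef.partialTraceRight [Ring R] [PartialOrder R] [StarRing R] [AddLeftMono R]
    {M : Matrix (m × n) (m × n) R} (hM : M.PosSemidef) : M.partialTraceRight.PosSemidef := by
  rw [partialTraceRight_eq_sum_submatrix]
  exact posSemidef_sum _ fun k _ => hM.submatrix _

end Matrix

theorem min_entropy_strong_subadditivity_general
    {A B C : Type*} [Fintype A] [Fintype B] [Fintype C]
    [DecidableEq A]
    (ρ : Matrix (A × B × C) (A × B × C) ℂ)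
    (σ : Matrix (B × C) (B × C) ℂ)
    (l : ℝ)
    (h : (l • ((1 : Matrix A A ℂ) ⊗ₖ σ) - ρ).PosSemidef) :
    (l • ((1 : Matrix A A ℂ) ⊗ₖ (Matrix.of fun b b' : B => ∑ c : C, σ (b, c) (b', c)))
      - Matrix.of (fun p q : A × B => ∑ c : C, ρ (p.1, p.2, c) (q.1, q.2, c))).PosSemidef := by
  have hAB := (h.submatrix (Equiv.prodAssoc A B C)).partialTraceRight
  -- what remains of `ρ` is `ρ_AB` up to unfolding `partialTraceRight`, so `rwa` closes the goal
  rwa [submatrix_sub, Pi.sub_apply, Pi.sub_apply, submatrix_smul, Pi.smul_apply, Pi.smul_apply,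
    partialTraceRight_sub, partialTraceRight_smul,
    partialTraceRight_submatrix_prodAssoc_kronecker] at hAB

/-- Strong subadditivity of the min-entropy: if `λ·(id_A ⊗ σ_BC) − ρ_ABC` is PSD, then
`λ·(id_A ⊗ σ_B) − ρ_AB` is PSD, where `σ_B` and `ρ_AB` are partial traces over `C`. -/
theorem min_entropy_strong_subadditivity
    {A B C : Type*} [Fintype A] [Fintype B] [Fintype C]
    [DecidableEq A] [DecidableEq B] [DecidableEq C]
    [Nonempty A] [Nonempty B] [Nonempty C]
    (ρ : Matrix (A × B × C) (A × B × C) ℂ) (hρ : ρ.PosSemidef)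
    (σ : Matrix (B × C) (B × C) ℂ) (hσ : σ.PosSemidef)
    (l : ℝ) (hl : 0 ≤ l)
    (h : (l • ((1 : Matrix A A ℂ) ⊗ₖ σ) - ρ).PosSemidef) :
    (l • ((1 : Matrix A A ℂ) ⊗ₖ (Matrix.of fun b b' : B => ∑ c : C, σ (b, c) (b', c)))
      - Matrix.of (fun p q : A × B => ∑ c : C, ρ (p.1, p.2, c) (q.1, q.2, c))).PosSemidef :=
  min_entropy_strong_subadditivity_general ρ σ l h
end

section
/- Let X, B, C be nonempty finite types, let (ρ^x)_{x∈X} be a family of PSD matrices indexed by B × C, let σ be a PSD matrix indexed by C, and let λ ≥ 0. If λ·(id_B ⊗ σ) − ∑_{x∈X} ρ^x is PSD, then λ·(id_X ⊗ id_B ⊗ σ) − ∑_{x∈X} E_{xx} ⊗ ρ^x is PSD. (Classical subsystems have nonnegative min-entropy: for a state ρ_{XBC} classical on X, H_min(ρ_{XBC}|σ) ≥ H_min(ρ_{BC}|σ).) -/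
/-!
Each `ρ^x` is dominated by `∑ₓ ρ^x ≤ λ·(id_B ⊗ σ)`, and since `∑ₓ E_xx = id_X` the matrix in the
conclusion is the block-diagonal sum `∑ₓ E_xx ⊗ (λ·(id_B ⊗ σ) − ρ^x)` of PSD blocks.
-/

open Matrix Kronecker
open scoped ComplexOrder MatrixOrder

namespace Matrix

theorem PosSemidef.single {𝕜 n : Type*} [RCLike 𝕜] [DecidableEq n] (i : n) {c : 𝕜}
    (hc : 0 ≤ c) : (single i i c).PosSemidef := by
  rw [← diagonal_single]
  exact PosSemidef.diagonal (Pi.single_nonneg.2 hc)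

theorem sum_single_kronecker_sub {X m n α : Type*} [Fintype X] [DecidableEq X] [Ring α]
    (A : Matrix m n α) (B : X → Matrix m n α) :
    ∑ x, single x x (1 : α) ⊗ₖ (A - B x)
      = (1 : Matrix X X α) ⊗ₖ A - ∑ x, single x x 1 ⊗ₖ B x := by
  have hsub (x : X) :
      single x x (1 : α) ⊗ₖ (A - B x) = single x x 1 ⊗ₖ A - single x x 1 ⊗ₖ B x :=
    map_sub (kroneckerBilinear (R := ℤ) (single x x (1 : α))) A (B x)
  have hsum : ∑ x : X, single x x (1 : α) ⊗ₖ A = (1 : Matrix X X α) ⊗ₖ A := by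
    rw [← sum_single_one]
    exact (map_sum ((kroneckerBilinear (R := ℤ)).flip A) _ _).symm
  simp only [hsub, Finset.sum_sub_distrib, hsum]

end Matrix

theorem classical_subsystem_min_entropy_nonneg_general
    {X B C : Type*} [Fintype X] [Fintype B] [Fintype C]
    [DecidableEq X] [DecidableEq B]
    (ρ : X → Matrix (B × C) (B × C) ℂ) (hρ : ∀ x, (ρ x).PosSemidef)
    (σ : Matrix C C ℂ)
    (l : ℝ)
    (h : (l • ((1 : Matrix B B ℂ) ⊗ₖ σ) - ∑ x : X, ρ x).PosSemidef) :
    (l • ((1 : Matrix X X ℂ) ⊗ₖ ((1 : Matrix B B ℂ) ⊗ₖ σ))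
      - ∑ x : X, Matrix.single x x (1 : ℂ) ⊗ₖ ρ x).PosSemidef := by
  have hle (x : X) : ρ x ≤ l • ((1 : Matrix B B ℂ) ⊗ₖ σ) :=
    (Finset.single_le_sum (fun y _ => (hρ y).nonneg) (Finset.mem_univ x)).trans h
  rw [← kronecker_smul, ← sum_single_kronecker_sub]
  exact posSemidef_sum _ fun x _ => (PosSemidef.single x zero_le_one).kronecker (hle x)

/-- Classical subsystems have nonnegative min-entropy: if `λ·(id_B ⊗ σ) − ∑ₓ ρ^x`
is PSD, then `λ·(id_X ⊗ id_B ⊗ σ) − ∑ₓ E_xx ⊗ ρ^x` is PSD. -/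
theorem classical_subsystem_min_entropy_nonneg
    {X B C : Type*} [Fintype X] [Fintype B] [Fintype C]
    [DecidableEq X] [DecidableEq B] [DecidableEq C]
    [Nonempty X] [Nonempty B] [Nonempty C]
    (ρ : X → Matrix (B × C) (B × C) ℂ) (hρ : ∀ x, (ρ x).PosSemidef)
    (σ : Matrix C C ℂ) (hσ : σ.PosSemidef)
    (l : ℝ) (hl : 0 ≤ l)
    (h : (l • ((1 : Matrix B B ℂ) ⊗ₖ σ) - ∑ x : X, ρ x).PosSemidef) :
    (l • ((1 : Matrix X X ℂ) ⊗ₖ ((1 : Matrix B B ℂ) ⊗ₖ σ))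
      - ∑ x : X, Matrix.single x x (1 : ℂ) ⊗ₖ ρ x).PosSemidef :=
  classical_subsystem_min_entropy_nonneg_general ρ hρ σ l h
end

section
/- Let A, B, A', B' be nonempty finite types and let (E_k)_{k∈K} be a finite family of complex matrices with rows indexed by A' × B' and columns indexed by A × B; write E(τ) := ∑_{k∈K} E_k · τ · E_kᴴ for the associated completely positive map. Let σ be a PSD matrix indexed by B and σ̃ a PSD matrix indexed by B' such that (id_{A'} ⊗ σ̃) − E(id_A ⊗ σ) is PSD. Then for every PSD matrix ρ indexed by A × B and every λ ≥ 0 such that λ·(id_A ⊗ σ) − ρ is PSD, the matrix λ·(id_{A'} ⊗ σ̃) − E(ρ) is PSD. (Quantum operations can only increase min-entropy: H_min(E(ρ)|σ̃) ≥ H_min(ρ|σ).) -/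
open Matrix Kronecker
open scoped ComplexOrder

/-!
Writing `X := id_A ⊗ σ`, `Y := id_{A'} ⊗ σ̃` and using linearity of `E`,
`λ Y - E(ρ) = λ (Y - E(X)) + E(λ X - ρ)`. The first summand is PSD by hypothesis, the second
because a map in Kraus form `τ ↦ ∑ₖ Eₖ τ Eₖᴴ` sends PSD matrices to PSD matrices.
-/

namespace Matrix

variable {m n K R : Type*} [Fintype n] [Fintype K] [CommRing R] [StarRing R]

def krausMap (E : K → Matrix m n R) (τ : Matrix n n R) : Matrix m m R :=
  ∑ k, E k * τ * (E k)ᴴ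

theorem krausMap_sub (E : K → Matrix m n R) (X Y : Matrix n n R) :
    krausMap E (X - Y) = krausMap E X - krausMap E Y := by
  simp only [krausMap, Matrix.mul_sub, Matrix.sub_mul, Finset.sum_sub_distrib]

theorem krausMap_smul {S : Type*} [Monoid S] [DistribMulAction S R] [IsScalarTower S R R] [SMulCommClass S R R]
    (E : K → Matrix m n R) (c : S) (X : Matrix n n R) :
    krausMap E (c • X) = c • krausMap E X := by
  simp only [krausMap, Matrix.mul_smul, Matrix.smul_mul, Finset.smul_sum]

theorem PosSemidef.krausMap [PartialOrder R] [StarOrderedRing R] [Finite m]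
    {τ : Matrix n n R} (hτ : τ.PosSemidef) (E : K → Matrix m n R) :
    (krausMap E τ).PosSemidef :=
  posSemidef_sum _ fun k _ => hτ.mul_mul_conjTranspose_same (E k)

end Matrix

theorem cpm_increases_min_entropy_general
    {A B A' B' K : Type*} [Fintype A] [Fintype B] [Fintype A'] [Fintype B'] [Fintype K]
    [DecidableEq A] [DecidableEq B] [DecidableEq A'] [DecidableEq B']
    (E : K → Matrix (A' × B') (A × B) ℂ)
    (σ : Matrix B B ℂ)
    (σt : Matrix B' B' ℂ)
    (hdom : ((1 : Matrix A' A' ℂ) ⊗ₖ σt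
        - ∑ k : K, E k * ((1 : Matrix A A ℂ) ⊗ₖ σ) * (E k)ᴴ).PosSemidef)
    (ρ : Matrix (A × B) (A × B) ℂ)
    (l : ℝ) (hl : 0 ≤ l)
    (h : (l • ((1 : Matrix A A ℂ) ⊗ₖ σ) - ρ).PosSemidef) :
    (l • ((1 : Matrix A' A' ℂ) ⊗ₖ σt) - ∑ k : K, E k * ρ * (E k)ᴴ).PosSemidef := by
  set X := (1 : Matrix A A ℂ) ⊗ₖ σ
  set Y := (1 : Matrix A' A' ℂ) ⊗ₖ σt
  have hsplit : l • Y - krausMap E ρ = l • (Y - krausMap E X) + krausMap E (l • X - ρ) := by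
    rw [krausMap_sub, krausMap_smul, smul_sub]
    abel
  change (l • Y - krausMap E ρ).PosSemidef
  rw [hsplit]
  exact (hdom.smul hl).add (h.krausMap E)

/-- Quantum operations can only increase min-entropy: for a completely positive map
`E(τ) = ∑ₖ Eₖ τ Eₖᴴ` with `(id_{A'} ⊗ σ̃) − E(id_A ⊗ σ)` PSD, if `λ·(id_A ⊗ σ) − ρ`
is PSD then `λ·(id_{A'} ⊗ σ̃) − E(ρ)` is PSD. -/
theorem cpm_increases_min_entropy
    {A B A' B' K : Type*} [Fintype A] [Fintype B] [Fintype A'] [Fintype B'] [Fintype K]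
    [DecidableEq A] [DecidableEq B] [DecidableEq A'] [DecidableEq B']
    [Nonempty A] [Nonempty B] [Nonempty A'] [Nonempty B']
    (E : K → Matrix (A' × B') (A × B) ℂ)
    (σ : Matrix B B ℂ) (hσ : σ.PosSemidef)
    (σt : Matrix B' B' ℂ) (hσt : σt.PosSemidef)
    (hdom : ((1 : Matrix A' A' ℂ) ⊗ₖ σt
        - ∑ k : K, E k * ((1 : Matrix A A ℂ) ⊗ₖ σ) * (E k)ᴴ).PosSemidef)
    (ρ : Matrix (A × B) (A × B) ℂ) (hρ : ρ.PosSemidef)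
    (l : ℝ) (hl : 0 ≤ l)
    (h : (l • ((1 : Matrix A A ℂ) ⊗ₖ σ) - ρ).PosSemidef) :
    (l • ((1 : Matrix A' A' ℂ) ⊗ₖ σt) - ∑ k : K, E k * ρ * (E k)ᴴ).PosSemidef :=
  cpm_increases_min_entropy_general E σ σt hdom ρ l hl h
end

section
/- Let S be a Hermitian complex matrix and σ a PSD complex matrix, both indexed by the same nonempty finite type. Then ‖σ^{1/2} · S · σ^{1/2}‖₁ ≤ √( tr(S²) · tr(σ²) ), where σ^{1/2} denotes the unique PSD square root of σ, ‖M‖₁ is the trace norm of the Hermitian matrix M (the sum of the absolute values of its eigenvalues), and tr(S²), tr(σ²) are real and nonnegative. -/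
open Matrix
open scoped Classical ComplexOrder

/-- Trace norm of a Hermitian complex matrix: the sum of the absolute values of
its eigenvalues. -/
noncomputable def traceNorm {n : Type*} [Fintype n] [DecidableEq n] (M : Matrix n n ℂ) : ℝ :=
  if h : M.IsHermitian then ∑ i, |h.eigenvalues i| else 0

/-- The PSD square root, as `Matrix.PosSemidef.sqrt` was defined in Mathlib (Dec 2024). -/
noncomputable def Matrix.PosSemidef.sqrt {n : Type*} [Fintype n] [DecidableEq n] {A : Matrix n n ℂ}
    (hA : A.PosSemidef) : Matrix n n ℂ :=
  (hA.1.eigenvectorUnitary : Matrix n n ℂ) * diagonal ((↑) ∘ Real.sqrt ∘ hA.1.eigenvalues) *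
    (star hA.1.eigenvectorUnitary : Matrix n n ℂ)

/-!
Let `T = σ^{1/2} S σ^{1/2}` and let `U` be the Hermitian involution `sign(T)` given by the
functional calculus of `x ↦ if 0 ≤ x then 1 else -1`, so that `‖T‖₁ = tr(U T) = tr(R S)` with
`R = σ^{1/2} U σ^{1/2}`. Cauchy–Schwarz for the Hilbert–Schmidt inner product `⟪A, B⟫ = tr(Aᴴ B)`
gives `|tr(R S)| ≤ ‖R‖₂ ‖S‖₂`, and `‖R‖₂² = tr(U σ U σ) ≤ ‖U σ U‖₂ ‖σ‖₂ = tr(σ²)` by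
Cauchy–Schwarz once more, since conjugation by a unitary preserves `‖·‖₂`.
-/

namespace Matrix

open RCLike

variable {𝕜 : Type*} [RCLike 𝕜] {m n : Type*} [Fintype m] [Fintype n]

theorem trace_conjTranspose_mul_eq_inner (A B : Matrix m n 𝕜) :
    (Aᴴ * B).trace =
      inner 𝕜 (WithLp.toLp 2 (Function.uncurry A)) (WithLp.toLp 2 (Function.uncurry B)) := by
  simp only [trace, diag_apply, mul_apply, conjTranspose_apply, PiLp.inner_apply,
    Fintype.sum_prod_type, RCLike.inner_apply]
  rw [Finset.sum_comm]
  simp only [mul_comm]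
  rfl

theorem re_trace_conjTranspose_mul_self_nonneg (A : Matrix m n 𝕜) :
    0 ≤ re (Aᴴ * A).trace := by
  rw [trace_conjTranspose_mul_eq_inner]
  exact inner_self_nonneg

theorem norm_trace_conjTranspose_mul_le (A B : Matrix m n 𝕜) :
    ‖(Aᴴ * B).trace‖ ≤ √(re (Aᴴ * A).trace) * √(re (Bᴴ * B).trace) := by
  simpa only [trace_conjTranspose_mul_eq_inner, ← norm_eq_sqrt_re_inner] using
    norm_inner_le_norm (𝕜 := 𝕜) _ _

variable [DecidableEq n]

theorem IsHermitian.re_trace_mul_unitary_conj_mul_le {σ U : Matrix n n 𝕜} (hσ : σ.IsHermitian)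
    (hU : U ∈ unitaryGroup n 𝕜) :
    re (U * σ * star U * σ).trace ≤ re (σ * σ).trace := by
  have hUσU : (U * σ * star U)ᴴ = U * σ * star U := by
    simp only [conjTranspose_mul, hσ.eq, star_eq_conjTranspose, conjTranspose_conjTranspose,
      mul_assoc]
  have hsq : ((U * σ * star U)ᴴ * (U * σ * star U)).trace = (σᴴ * σ).trace := by
    have hU' : star U * U = 1 := mem_unitaryGroup_iff'.mp hU
    rw [hUσU, hσ.eq, show U * σ * star U * (U * σ * star U) =
      U * (σ * (star U * U) * σ) * star U by noncomm_ring, hU', mul_one, trace_mul_cycle, hU',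
      one_mul]
  have hnn := re_trace_conjTranspose_mul_self_nonneg σ
  calc re (U * σ * star U * σ).trace
      ≤ ‖((U * σ * star U)ᴴ * σ).trace‖ := by rw [hUσU]; exact re_le_norm _
    _ ≤ √(re ((U * σ * star U)ᴴ * (U * σ * star U)).trace) * √(re (σᴴ * σ).trace) :=
        norm_trace_conjTranspose_mul_le _ _
    _ = re (σ * σ).trace := by rw [hsq, Real.mul_self_sqrt hnn, hσ.eq]

theorem norm_trace_mul_sandwich_le {r S U : Matrix n n 𝕜} (hr : r.IsHermitian)
    (hS : S.IsHermitian) (hU : U.IsHermitian) (hUU : U * U = 1) :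
    ‖(U * (r * S * r)).trace‖ ≤ √(re (S * S).trace) * √(re (r * r * (r * r)).trace) := by
  have hrUr : (r * U * r)ᴴ = r * U * r := by
    simp only [conjTranspose_mul, hr.eq, hU.eq, mul_assoc]
  have hcycle : (U * (r * S * r)).trace = ((r * U * r)ᴴ * S).trace := by
    rw [hrUr, ← mul_assoc, trace_mul_comm, ← mul_assoc, ← mul_assoc]
  have hU' : U ∈ unitaryGroup n 𝕜 := by
    rwa [mem_unitaryGroup_iff, star_eq_conjTranspose, hU.eq]
  have hsq : re ((r * U * r)ᴴ * (r * U * r)).trace ≤ re (r * r * (r * r)).trace := by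
    have hσ : (r * r).IsHermitian := by
      simpa only [hr.eq] using isHermitian_mul_conjTranspose_self r
    have hstar : star U = U := by rw [star_eq_conjTranspose, hU.eq]
    rw [hrUr, show r * U * r * (r * U * r) = r * (U * (r * r) * star U * r) by
      rw [hstar]; noncomm_ring, trace_mul_comm, mul_assoc _ r r]
    exact hσ.re_trace_mul_unitary_conj_mul_le hU'
  calc ‖(U * (r * S * r)).trace‖
      ≤ √(re ((r * U * r)ᴴ * (r * U * r)).trace) * √(re (Sᴴ * S).trace) := by
        rw [hcycle]; exact norm_trace_conjTranspose_mul_le _ _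
    _ ≤ √(re (r * r * (r * r)).trace) * √(re (Sᴴ * S).trace) := by gcongr
    _ = √(re (S * S).trace) * √(re (r * r * (r * r)).trace) := by rw [hS.eq, mul_comm]

theorem IsHermitian.trace_cfc {A : Matrix n n 𝕜} (hA : A.IsHermitian) (f : ℝ → ℝ) :
    (cfc f A).trace = ∑ i, (f (hA.eigenvalues i) : 𝕜) := by
  rw [hA.cfc_eq, IsHermitian.cfc, Unitary.conjStarAlgAut_apply, trace_mul_cycle,
    Unitary.coe_star_mul_self, one_mul, trace_diagonal]
  rfl

theorem PosSemidef.sqrt_eq_cfc {A : Matrix n n ℂ} (hA : A.PosSemidef) :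
    hA.sqrt = cfc Real.sqrt A := by
  rw [hA.1.cfc_eq]
  rfl

theorem PosSemidef.isHermitian_sqrt {A : Matrix n n ℂ} (hA : A.PosSemidef) :
    hA.sqrt.IsHermitian := by
  rw [hA.sqrt_eq_cfc]
  exact cfc_predicate _ _

theorem PosSemidef.sqrt_mul_sqrt_self {A : Matrix n n ℂ} (hA : A.PosSemidef) :
    hA.sqrt * hA.sqrt = A := by
  rw [hA.sqrt_eq_cfc, ← cfc_mul _ _ _ (by fun_prop) (by fun_prop)]
  conv_rhs => rw [← cfc_id' ℝ A hA.1.isSelfAdjoint]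
  refine cfc_congr fun x hx => ?_
  rw [hA.1.spectrum_real_eq_range_eigenvalues] at hx
  obtain ⟨i, rfl⟩ := hx
  exact Real.mul_self_sqrt (hA.eigenvalues_nonneg i)

theorem IsHermitian.exists_involution_trace_mul_eq_traceNorm {T : Matrix n n ℂ}
    (hT : T.IsHermitian) :
    ∃ U : Matrix n n ℂ, U.IsHermitian ∧ U * U = 1 ∧ (U * T).trace = traceNorm T := by
  let sign : ℝ → ℝ := fun x => if 0 ≤ x then 1 else -1
  have hcont : ContinuousOn sign (spectrum ℝ T) := T.finite_real_spectrum.continuousOn _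
  refine ⟨cfc sign T, cfc_predicate _ _, ?_, ?_⟩
  · rw [← cfc_mul _ _ _ hcont hcont]
    convert cfc_const_one ℝ T using 2
    funext x
    by_cases hx : 0 ≤ x <;> simp [sign, hx]
  · have hsign_mul : (fun x => sign x * x) = fun x => |x| := by
      funext x
      by_cases hx : 0 ≤ x
      · simp [sign, hx, abs_of_nonneg hx]
      · simp [sign, hx, abs_of_neg (not_le.mp hx)]
    have hmul : cfc sign T * T = cfc (fun x : ℝ => |x|) T := by
      rw [← hsign_mul, cfc_mul _ _ _ hcont, cfc_id' ℝ T hT.isSelfAdjoint]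
    rw [hmul, hT.trace_cfc, traceNorm, dif_pos hT]
    push_cast
    rfl

end Matrix

theorem traceNorm_sqrt_sandwich_general
    {n : Type*} [Fintype n] [DecidableEq n]
    (S σ : Matrix n n ℂ) (hS : S.IsHermitian) (hσ : σ.PosSemidef) :
    traceNorm (hσ.sqrt * S * hσ.sqrt)
      ≤ Real.sqrt (((S ^ 2).trace).re * ((σ ^ 2).trace).re) := by
  have hr := hσ.isHermitian_sqrt
  have hT : (hσ.sqrt * S * hσ.sqrt).IsHermitian := by
    simpa only [hr.eq] using isHermitian_mul_mul_conjTranspose hσ.sqrt hS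
  obtain ⟨U, hU, hUU, htrace⟩ := hT.exists_involution_trace_mul_eq_traceNorm
  have hbound := norm_trace_mul_sandwich_le hr hS hU hUU
  rw [htrace, hσ.sqrt_mul_sqrt_self, Complex.norm_real] at hbound
  have hSS : 0 ≤ (S * S).trace.re := by
    simpa only [hS.eq, RCLike.re_to_complex] using re_trace_conjTranspose_mul_self_nonneg S
  rw [sq S, sq σ, Real.sqrt_mul hSS]
  exact (Real.le_norm_self _).trans hbound

/-- For a Hermitian matrix `S` and a PSD matrix `σ`,
`‖σ^{1/2} S σ^{1/2}‖₁ ≤ √(tr(S²)·tr(σ²))`. -/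
theorem traceNorm_sqrt_sandwich
    {n : Type*} [Fintype n] [DecidableEq n] [Nonempty n]
    (S σ : Matrix n n ℂ) (hS : S.IsHermitian) (hσ : σ.PosSemidef) :
    traceNorm (hσ.sqrt * S * hσ.sqrt)
      ≤ Real.sqrt (((S ^ 2).trace).re * ((σ ^ 2).trace).re) :=
  traceNorm_sqrt_sandwich_general S σ hS hσ
end

section
/- Let S be a Hermitian complex matrix and σ a positive definite complex matrix, both indexed by the same nonempty finite type. Then ‖S‖₁ ≤ √( tr(σ) · tr((σ^{−1/4} · S · σ^{−1/4})²) ), where ‖S‖₁ is the trace norm (the sum of the absolute values of the eigenvalues of S), σ^{−1/4} is the inverse of the unique PSD fourth root of σ, and tr((σ^{−1/4} S σ^{−1/4})²) is real and nonnegative (it equals tr(S σ^{−1/2} S σ^{−1/2}) for σ^{−1/2} the inverse PSD square root). -/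
/-!
Let `U` be the unitary `V diag(sign λᵢ) Vᴴ` built from an eigenbasis of `S`, so that
`‖S‖₁ = tr(S U)`. Writing `S = σ4 T σ4` with `T = σ^{-1/4} S σ^{-1/4}`, Cauchy–Schwarz for the
Hilbert–Schmidt inner product gives `tr(S U) = tr(T · σ4 U σ4) ≤ ‖T‖₂ ‖σ4 U σ4‖₂`, and a second
application of it bounds `‖σ4 U σ4‖₂² = tr(Uᴴ σ^{1/2} U σ^{1/2})` by `‖σ^{1/2}‖₂² = tr σ`.
-/

open Matrix
open scoped Classical ComplexOrder

namespace Matrix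
variable {n 𝕜 : Type*} [Fintype n] [RCLike 𝕜]

-- Cauchy–Schwarz for `⟪X, Y⟫ = tr(Y Xᴴ)`, the inner product Mathlib attaches to the PSD matrix `1`.
theorem norm_trace_mul_le (A B : Matrix n n 𝕜) :
    ‖(A * B).trace‖ ≤ √(RCLike.re (A * Aᴴ).trace) * √(RCLike.re (Bᴴ * B).trace) := by
  classical
  let := toMatrixSeminormedAddCommGroup (1 : Matrix n n 𝕜) PosSemidef.one
  let := toMatrixInnerProductSpace (1 : Matrix n n 𝕜) PosSemidef.one
  have h := norm_inner_le_norm (𝕜 := 𝕜) Bᴴ A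
  rw [norm_eq_sqrt_re_inner (𝕜 := 𝕜) A, norm_eq_sqrt_re_inner (𝕜 := 𝕜) Bᴴ] at h
  change ‖(A * 1 * Bᴴᴴ).trace‖ ≤
    √(RCLike.re (Bᴴ * 1 * Bᴴᴴ).trace) * √(RCLike.re (A * 1 * Aᴴ).trace) at h
  simpa [mul_comm] using h

theorem re_trace_mul_conjTranspose_self_nonneg (A : Matrix n n 𝕜) :
    0 ≤ RCLike.re (A * Aᴴ).trace :=
  (RCLike.nonneg_iff.mp (posSemidef_self_mul_conjTranspose A).trace_nonneg).1

variable [DecidableEq n]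

theorem re_trace_conjTranspose_mul_mul_mul_conjTranspose_le {U : Matrix n n 𝕜}
    (hU : U ∈ unitaryGroup n 𝕜) (P : Matrix n n 𝕜) :
    RCLike.re (Uᴴ * P * U * Pᴴ).trace ≤ RCLike.re (P * Pᴴ).trace := by
  have hUU : U * Uᴴ = 1 := mem_unitaryGroup_iff.mp hU
  have hconj : (Uᴴ * P * U) * (Uᴴ * P * U)ᴴ = Uᴴ * (P * Pᴴ) * U := by
    simp only [conjTranspose_mul, conjTranspose_conjTranspose, mul_assoc]
    rw [← mul_assoc U, hUU, one_mul]
  have hinv : (Uᴴ * (P * Pᴴ) * U).trace = (P * Pᴴ).trace := by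
    rw [trace_mul_cycle, hUU, one_mul]
  calc RCLike.re (Uᴴ * P * U * Pᴴ).trace
      ≤ ‖(Uᴴ * P * U * Pᴴ).trace‖ := RCLike.re_le_norm _
    _ ≤ √(RCLike.re (P * Pᴴ).trace) * √(RCLike.re (P * Pᴴ).trace) := by
      simpa only [hconj, hinv, conjTranspose_conjTranspose] using
        norm_trace_mul_le (Uᴴ * P * U) Pᴴ
    _ = RCLike.re (P * Pᴴ).trace := Real.mul_self_sqrt (re_trace_mul_conjTranspose_self_nonneg P)

theorem IsHermitian.exists_mem_unitaryGroup_trace_mul_eq {S : Matrix n n 𝕜}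
    (hS : S.IsHermitian) :
    ∃ U ∈ unitaryGroup n 𝕜, (S * U).trace = ((∑ i, |hS.eigenvalues i| : ℝ) : 𝕜) := by
  let V := hS.eigenvectorUnitary
  let ε : n → 𝕜 := fun i ↦ if 0 ≤ hS.eigenvalues i then 1 else -1
  have hε : diagonal ε ∈ unitaryGroup n 𝕜 := by
    rw [mem_unitaryGroup_iff, star_eq_conjTranspose, diagonal_conjTranspose, diagonal_mul_diagonal,
      ← diagonal_one]
    congr 1
    funext i
    simp only [ε, Pi.star_apply]
    split_ifs <;> simp
  refine ⟨Unitary.conjStarAlgAut 𝕜 _ V (diagonal ε), ?_, ?_⟩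
  · exact mul_mem (mul_mem V.2 hε) (Unitary.star_mem V.2)
  · conv_lhs => rw [hS.spectral_theorem]
    rw [← map_mul, Unitary.conjStarAlgAut_apply, trace_mul_cycle, Unitary.coe_star_mul_self,
      one_mul, diagonal_mul_diagonal, trace_diagonal, RCLike.ofReal_sum]
    refine Finset.sum_congr rfl fun i _ ↦ ?_
    simp only [Function.comp_apply, ε]
    split_ifs with h
    · simp [abs_of_nonneg h]
    · simp [abs_of_neg (not_le.mp h)]

theorem IsHermitian.sum_abs_eigenvalues_le {S : Matrix n n 𝕜} (hS : S.IsHermitian)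
    {A T : Matrix n n 𝕜} (hST : S = Aᴴ * T * A) :
    ∑ i, |hS.eigenvalues i| ≤
      √(RCLike.re (T * Tᴴ).trace) * √(RCLike.re ((Aᴴ * A) ^ 2).trace) := by
  obtain ⟨U, hU, hSU⟩ := hS.exists_mem_unitaryGroup_trace_mul_eq
  set M := A * U * Aᴴ
  have htr : (S * U).trace = (T * M).trace := by
    rw [hST, mul_assoc, mul_assoc, trace_mul_comm]
    simp only [M, mul_assoc]
  have hM : RCLike.re (Mᴴ * M).trace ≤ RCLike.re ((Aᴴ * A) ^ 2).trace := by
    have h := re_trace_conjTranspose_mul_mul_mul_conjTranspose_le hU (Aᴴ * A)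
    rw [conjTranspose_mul, conjTranspose_conjTranspose] at h
    convert h using 2
    · simp only [M, conjTranspose_mul, conjTranspose_conjTranspose, mul_assoc]
      rw [trace_mul_comm]
      simp only [mul_assoc]
    · rw [pow_two]
  calc ∑ i, |hS.eigenvalues i| = RCLike.re (S * U).trace := by rw [hSU, RCLike.ofReal_re]
    _ ≤ ‖(T * M).trace‖ := htr ▸ RCLike.re_le_norm _
    _ ≤ √(RCLike.re (T * Tᴴ).trace) * √(RCLike.re (Mᴴ * M).trace) := norm_trace_mul_le T M
    _ ≤ _ := by gcongr

end Matrix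

theorem traceNorm_le_sqrt_weighted_l2_general
    {n : Type*} [Fintype n] [DecidableEq n]
    (S σ : Matrix n n ℂ) (hS : S.IsHermitian) (hσ : σ.PosDef)
    (σ4 : Matrix n n ℂ) (hσ4 : σ4.PosSemidef) (hroot : σ4 ^ 4 = σ) :
    traceNorm S
      ≤ Real.sqrt (σ.trace.re * (((σ4⁻¹ * S * σ4⁻¹) ^ 2).trace).re) := by
  have : Invertible σ4 :=
    ((isUnit_pow_iff four_ne_zero).mp (hroot ▸ hσ.isUnit)).invertible
  set T := σ4⁻¹ * S * σ4⁻¹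
  have hTH : T.IsHermitian := by
    simpa only [hσ4.1.inv.eq] using isHermitian_conjTranspose_mul_mul σ4⁻¹ hS
  have hST : S = σ4ᴴ * T * σ4 := by
    simp only [T, hσ4.1.eq, mul_assoc, mul_inv_cancel_left_of_invertible, inv_mul_of_invertible,
      mul_one]
  have hσ4sq : (σ4ᴴ * σ4) ^ 2 = σ := by
    rw [hσ4.1.eq, ← pow_two, ← pow_mul, hroot]
  have hσtr : 0 ≤ σ.trace.re := (Complex.nonneg_iff.mp hσ.posSemidef.trace_nonneg).1
  rw [traceNorm, dif_pos hS, Real.sqrt_mul hσtr, mul_comm]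
  simpa only [hσ4sq, hTH.eq, ← pow_two, RCLike.re_to_complex] using hS.sum_abs_eigenvalues_le hST

/-- For a Hermitian matrix `S` and a positive definite `σ` (with PSD fourth root `σ4`),
`‖S‖₁ ≤ √(tr(σ)·tr((σ^{−1/4} S σ^{−1/4})²))`. -/
theorem traceNorm_le_sqrt_weighted_l2
    {n : Type*} [Fintype n] [DecidableEq n] [Nonempty n]
    (S σ : Matrix n n ℂ) (hS : S.IsHermitian) (hσ : σ.PosDef)
    (σ4 : Matrix n n ℂ) (hσ4 : σ4.PosSemidef) (hroot : σ4 ^ 4 = σ) :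
    traceNorm S
      ≤ Real.sqrt (σ.trace.re * (((σ4⁻¹ * S * σ4⁻¹) ^ 2).trace).re) :=
  traceNorm_le_sqrt_weighted_l2_general S σ hS hσ σ4 hσ4 hroot
end

section
/- Let n be a natural number, S a finite type, and ρ a PSD complex matrix indexed by (Fin n → S) which is permutation-invariant, i.e. ρ(x ∘ π, y ∘ π) = ρ(x, y) for every permutation π of Fin n and all x, y : Fin n → S. Then ρ has a permutation-symmetric purification: there exists a function ψ : (Fin n → S × S) → ℂ such that (i) ψ(w ∘ π) = ψ(w) for every permutation π of Fin n and every w : Fin n → S × S, and (ii) for all x, y : Fin n → S, ρ(x, y) = ∑_{z : Fin n → S} ψ(fun i ↦ (x i, z i)) · conj(ψ(fun i ↦ (y i, z i))). -/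
/-!
Take `ψ w := √ρ (fst ∘ w) (snd ∘ w)`, i.e. the vectorisation of the positive square root of `ρ`.
Since `√ρ` is Hermitian, `ρ = √ρ * (√ρ)ᴴ` is exactly the partial-trace identity (ii). Permuting the
sites is conjugation by a permutation matrix, which preserves positivity; by uniqueness of positive
square roots, `√ρ` inherits the permutation invariance of `ρ`, which gives (i).
-/

open Matrix
open scoped ComplexOrder MatrixOrder

namespace Matrix

variable {m n : Type*} [Fintype m] [DecidableEq m] [Fintype n] [DecidableEq n]

lemma cfcSqrt_submatrix_equiv {M : Matrix m m ℂ} (hM : M.PosSemidef) (e : n ≃ m) :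
    CFC.sqrt (M.submatrix e e) = (CFC.sqrt M).submatrix e e :=
  CFC.sqrt_unique
    (by rw [submatrix_mul_equiv, CFC.sqrt_mul_sqrt_self M hM.nonneg])
    ((CFC.sqrt_nonneg M).posSemidef.submatrix e).nonneg

lemma cfcSqrt_submatrix_self_of_submatrix_self {M : Matrix m m ℂ} (hM : M.PosSemidef)
    {e : m ≃ m} (he : M.submatrix e e = M) :
    (CFC.sqrt M).submatrix e e = CFC.sqrt M := by
  rw [← cfcSqrt_submatrix_equiv hM, he]

lemma PosSemidef.cfcSqrt_mul_conjTranspose_cfcSqrt {M : Matrix m m ℂ} (hM : M.PosSemidef) :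
    CFC.sqrt M * (CFC.sqrt M)ᴴ = M := by
  rw [(CFC.sqrt_nonneg M).posSemidef.isHermitian.eq, CFC.sqrt_mul_sqrt_self M hM.nonneg]

end Matrix

/-- Every permutation-invariant PSD matrix on an `n`-partite system has a
permutation-symmetric purification on the doubled system. -/
theorem symmetric_purification
    {S : Type*} [Fintype S] [DecidableEq S] (n : ℕ)
    (ρ : Matrix (Fin n → S) (Fin n → S) ℂ) (hρ : ρ.PosSemidef)
    (hsym : ∀ (π : Equiv.Perm (Fin n)) (x y : Fin n → S), ρ (x ∘ π) (y ∘ π) = ρ x y) :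
    ∃ ψ : (Fin n → S × S) → ℂ,
      (∀ (π : Equiv.Perm (Fin n)) (w : Fin n → S × S), ψ (w ∘ π) = ψ w) ∧
      ∀ x y : Fin n → S, ρ x y =
        ∑ z : Fin n → S,
          ψ (fun i => (x i, z i)) * (starRingEnd ℂ) (ψ (fun i => (y i, z i))) := by
  refine ⟨fun w => CFC.sqrt ρ (Prod.fst ∘ w) (Prod.snd ∘ w), fun π w => ?_, fun x y => ?_⟩
  · let permuteSites : (Fin n → S) ≃ (Fin n → S) := π.symm.arrowCongr (Equiv.refl S)
    have hρ_perm : ρ.submatrix permuteSites permuteSites = ρ := by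
      ext x y
      exact hsym π x y
    exact congrFun₂ (cfcSqrt_submatrix_self_of_submatrix_self hρ hρ_perm)
      (Prod.fst ∘ w) (Prod.snd ∘ w)
  · conv_lhs => rw [← hρ.cfcSqrt_mul_conjTranspose_cfcSqrt]
    rfl
end

section
/- Let n and d be natural numbers with d ≥ 1. The ℂ-submodule of all functions v : (Fin n → Fin d) → ℂ satisfying v(x ∘ π) = v(x) for every permutation π of Fin n and every x : Fin n → Fin d (the symmetric subspace of the n-fold tensor power of ℂ^d) is equal to the ℂ-linear span of the set of product functions { x ↦ ∏_{i} θ(x i) : θ : Fin d → ℂ }. -/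
/-!
Evaluating the vector of monomials `x ↦ ∏ᵢ X (x i)` at `θ` gives `θ^{⊗n}`. So a linear functional
with weights `w` that kills every `θ^{⊗n}` yields the polynomial `∑ₓ w x ∏ᵢ X (x i)`, which vanishes
on all of `ℂ^d` and hence is zero. Its coefficient at a monomial is the sum of `w` over the words
with those letter counts, and such words form a single permutation orbit, on which a symmetric
vector is constant. So every functional vanishing on the span vanishes on the symmetric subspace.
-/

open Finset

/-- The symmetric subspace of the `n`-fold tensor power of `ℂ^d`: functions
`v : (Fin n → Fin d) → ℂ` invariant under permutations of the tensor factors. -/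
noncomputable def symSubmodule (n d : ℕ) : Submodule ℂ ((Fin n → Fin d) → ℂ) where
  carrier := {v | ∀ (π : Equiv.Perm (Fin n)) (x : Fin n → Fin d), v (x ∘ π) = v x}
  add_mem' := by
    intro a b ha hb π x
    simp only [Pi.add_apply, ha π x, hb π x]
  zero_mem' := by
    intro π x
    rfl
  smul_mem' := by
    intro c a ha π x
    simp only [Pi.smul_apply, ha π x]

open MvPolynomial

section

variable {ι α : Type*} [Fintype ι]

noncomputable def occurrences (x : ι → α) : α →₀ ℕ := ∑ i, Finsupp.single (x i) 1

lemma occurrences_apply (x : ι → α) (a : α) : occurrences x a = Nat.card {i // x i = a} := by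
  classical
  simp [occurrences, Finsupp.finsetSum_apply, Finsupp.single_apply, Nat.card_eq_fintype_card,
    Fintype.card_subtype]

lemma exists_perm_comp_eq_of_occurrences_eq {x y : ι → α} (h : occurrences x = occurrences y) :
    ∃ π : Equiv.Perm ι, x ∘ π = y := by
  have hcard (a : α) : Nat.card {i // y i = a} = Nat.card {i // x i = a} := by
    rw [← occurrences_apply, ← occurrences_apply, h]
  exact ⟨Equiv.ofFiberEquiv fun a => (Finite.card_eq.1 (hcard a)).some,
    funext (Equiv.ofFiberEquiv_map _)⟩

lemma prod_X_eq_monomial_occurrences {R : Type*} [CommSemiring R] (x : ι → α) :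
    ∏ i, (X (x i) : MvPolynomial α R) = monomial (occurrences x) 1 := by
  simp only [occurrences, monomial_sum_one, X]

variable {K : Type*} [Field K] [Infinite K] [Fintype α] [DecidableEq ι] [DecidableEq α]

lemma sum_occurrences_fiber_eq_zero {w : (ι → α) → K}
    (hw : ∀ θ : α → K, ∑ y, w y * ∏ i, θ (y i) = 0) (m : α →₀ ℕ) :
    ∑ y with occurrences y = m, w y = 0 := by
  set Q : MvPolynomial α K := ∑ y, C (w y) * ∏ i, X (y i)
  have hQ : Q = 0 := MvPolynomial.funext fun θ => by
    simpa [Q, eval_prod] using hw θ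
  calc ∑ y with occurrences y = m, w y = coeff m Q := by
        simp [Q, coeff_sum, prod_X_eq_monomial_occurrences, C_mul_monomial, coeff_monomial,
          Finset.sum_filter]
    _ = 0 := by rw [hQ, coeff_zero]

lemma sum_mul_eq_zero_of_perm_invariant {v w : (ι → α) → K}
    (hv : ∀ (π : Equiv.Perm ι) x, v (x ∘ π) = v x)
    (hw : ∀ θ : α → K, ∑ y, w y * ∏ i, θ (y i) = 0) :
    ∑ y, v y * w y = 0 := by
  rw [← Finset.sum_fiberwise_of_maps_to (g := occurrences) (t := univ.image occurrences)
    (fun y _ => mem_image_of_mem _ (mem_univ y))]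
  refine Finset.sum_eq_zero fun m hm => ?_
  obtain ⟨x, -, rfl⟩ := mem_image.1 hm
  calc ∑ y with occurrences y = occurrences x, v y * w y
      = ∑ y with occurrences y = occurrences x, v x * w y := by
        refine Finset.sum_congr rfl fun y hy => ?_
        obtain ⟨π, rfl⟩ := exists_perm_comp_eq_of_occurrences_eq (mem_filter.1 hy).2.symm
        rw [hv]
    _ = 0 := by rw [← Finset.mul_sum, sum_occurrences_fiber_eq_zero hw, mul_zero]

theorem mem_span_prod_of_perm_invariant {v : (ι → α) → K}
    (hv : ∀ (π : Equiv.Perm ι) x, v (x ∘ π) = v x) :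
    v ∈ Submodule.span K (Set.range fun θ : α → K => fun x : ι → α => ∏ i, θ (x i)) := by
  refine (Subspace.forall_mem_dualAnnihilator_apply_eq_zero_iff _ v).1 fun φ hφ => ?_
  rw [Submodule.mem_dualAnnihilator] at hφ
  rw [φ.pi_apply_eq_sum_univ]
  refine sum_mul_eq_zero_of_perm_invariant hv fun θ => ?_
  have hθ := hφ _ (Submodule.subset_span ⟨θ, rfl⟩)
  rw [φ.pi_apply_eq_sum_univ] at hθ
  simpa only [smul_eq_mul, mul_comm] using hθ

end

theorem symSubmodule_eq_span_prod_general (n d : ℕ) :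
    symSubmodule n d =
      Submodule.span ℂ
        (Set.range fun θ : Fin d → ℂ => fun x : Fin n → Fin d => ∏ i, θ (x i)) := by
  refine le_antisymm (fun v hv => mem_span_prod_of_perm_invariant hv) ?_
  rw [Submodule.span_le]
  rintro _ ⟨θ, rfl⟩ π x
  exact Equiv.prod_comp π fun i => θ (x i)

/-- The symmetric subspace of `(ℂ^d)^{⊗n}` is spanned by the product vectors
`θ^{⊗n} : x ↦ ∏ᵢ θ(xᵢ)`. -/
theorem symSubmodule_eq_span_prod (n d : ℕ) (hd : 1 ≤ d) :
    symSubmodule n d =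
      Submodule.span ℂ
        (Set.range fun θ : Fin d → ℂ => fun x : Fin n → Fin d => ∏ i, θ (x i)) :=
  symSubmodule_eq_span_prod_general n d
end

section
/- Let n and d be natural numbers with d ≥ 1, and let ω be the rotation-invariant (uniform) probability measure on the unit sphere {θ : ‖θ‖ = 1} of the d-dimensional complex Euclidean space (indexed by Fin d). Then for all x, y : Fin n → Fin d, ∫ (∏_{i} θ(x i)) · conj(∏_{i} θ(y i)) dω(θ) = (binomial(n + d − 1, n))⁻¹ · (n!)⁻¹ · |{π ∈ Perm(Fin n) : ∀ i, x(π i) = y(i)}|. (Entrywise, the integral over pure product states of |θ⟩⟨θ|^{⊗n} equals binomial(n+d−1,n)⁻¹ times the orthogonal projector onto the symmetric subspace of (ℂ^d)^{⊗n}, the latter being the average (1/n!)·∑_π of the permutation matrices.) -/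
/-!
Write `I x y` for the integral and `P x y` for the number of permutations `π` with `x ∘ π = y`.
Diagonal phase unitaries `θ j ↦ u θ j` multiply `I x y` by `u ^ a * conj u ^ b`, where `a`, `b`
count the occurrences of `j` in `x`, `y`; so `I x y = 0` unless `y` is a rearrangement of `x`.
Since the unitary group is transitive on the sphere, `∫ |⟪ψ, θ⟫| ^ 2n dω = c ‖ψ‖ ^ 2n`; for real
`ψ = r` this reads `∑ I x y r^x r^y = c (∑ r_j²) ^ n`, while `∑ P x y r^x r^y = n! (∑ r_j²) ^ n`.
Both `I` and `P` are invariant under rearranging `x` and `y` separately, so comparing the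
coefficients of `r ^ (2 · multideg x)` gives `n! I = c P`. The constant is fixed by the traces:
`∑ I z z = ∫ ‖θ‖ ^ 2n dω = 1`, and by Burnside's lemma `∑ P z z = n!` times the number of orbits,
which are the multisets of size `n` in `Fin d`.
-/

open MeasureTheory Finset
open scoped ComplexConjugate InnerProductSpace
open Equiv

section Tuples

variable {ι : Type*} {n : ℕ}

noncomputable def multideg (x : Fin n → ι) : ι →₀ ℕ := ∑ i, Finsupp.single (x i) 1

lemma multideg_apply [DecidableEq ι] (x : Fin n → ι) (j : ι) :
    multideg x j = #{i | x i = j} := by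
  simp only [multideg, Finsupp.finsetSum_apply, Finsupp.single_apply, Finset.card_filter]

lemma multideg_eq_toFinsupp [DecidableEq ι] (x : Fin n → ι) :
    multideg x = Multiset.toFinsupp (univ.val.map x) := by
  ext j
  rw [multideg_apply, Multiset.toFinsupp_apply, Multiset.count_map, Finset.card, Finset.filter_val]
  simp only [eq_comm]

lemma exists_perm_iff_multideg_eq {x y : Fin n → ι} :
    (∃ π : Perm (Fin n), ∀ i, x (π i) = y i) ↔ multideg x = multideg y := by
  classical
  constructor
  · rintro ⟨π, hπ⟩
    simp only [multideg, ← hπ]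
    exact (Equiv.sum_comp π fun i => Finsupp.single (x i) 1).symm
  · intro h
    have hfiber (j : ι) : Fintype.card {i // y i = j} = Fintype.card {i // x i = j} := by
      simpa [Fintype.card_subtype, multideg_apply] using (DFunLike.congr_fun h j).symm
    exact ⟨ofFiberEquiv fun j => Fintype.equivOfCardEq (hfiber j), ofFiberEquiv_map _⟩

lemma eq_comp_perm_of_multideg_eq {x y : Fin n → ι} (h : multideg x = multideg y) :
    ∃ π : Perm (Fin n), y = x ∘ π := by
  obtain ⟨π, hπ⟩ := exists_perm_iff_multideg_eq.2 h
  exact ⟨π, funext fun i => (hπ i).symm⟩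

lemma card_perm_comp_comp (x y : Fin n → ι) (σ τ : Perm (Fin n)) :
    Nat.card {π : Perm (Fin n) // ∀ i, x (σ (π i)) = y (τ i)}
      = Nat.card {π : Perm (Fin n) // ∀ i, x (π i) = y i} := by
  refine Nat.card_congr <| ((Equiv.mulLeft σ).trans (Equiv.mulRight τ⁻¹)).subtypeEquiv fun π => ?_
  simp only [Equiv.trans_apply, Equiv.coe_mulLeft, Equiv.coe_mulRight, Perm.coe_mul,
    Function.comp_apply]
  exact ⟨fun h i => by simpa using h (τ⁻¹ i), fun h i => by simpa using h (τ i)⟩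

lemma orbitRel_domMulAct_perm_iff {x y : Fin n → ι} :
    MulAction.orbitRel (Perm (Fin n))ᵈᵐᵃ (Fin n → ι) x y ↔ multideg x = multideg y := by
  rw [MulAction.orbitRel_apply, MulAction.mem_orbit_iff, eq_comm, ← exists_perm_iff_multideg_eq,
    DomMulAct.mk.surjective.exists]
  simp only [funext_iff, DomMulAct.smul_apply, Equiv.symm_apply_apply, Perm.smul_def]

lemma exists_map_univ_val_eq (s : Sym ι n) : ∃ x : Fin n → ι, univ.val.map x = s := by
  refine ⟨fun i => (s : Multiset ι).toList.get (i.cast (by simp)), ?_⟩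
  rw [Fin.univ_val_map]
  conv_rhs => rw [← Multiset.coe_toList (s : Multiset ι)]
  congr 1
  exact List.ext_get (by simp) (by simp)

lemma MvPolynomial.prod_X_eq_monomial_multideg {R : Type*} [CommSemiring R] (x : Fin n → ι) :
    ∏ i, (X (x i) : MvPolynomial ι R) = monomial (multideg x) 1 := by
  simp [multideg, monomial_sum_one, X]

variable [Fintype ι]

lemma card_orbitRel_quotient_domMulAct_perm :
    Nat.card (MulAction.orbitRel.Quotient (Perm (Fin n))ᵈᵐᵃ (Fin n → ι))
      = (Fintype.card ι).multichoose n := by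
  classical
  let f : (Fin n → ι) → Sym ι n := fun x => ⟨univ.val.map x, by simp⟩
  have hf : Function.Surjective f := fun s => by
    obtain ⟨x, hx⟩ := exists_map_univ_val_eq s
    exact ⟨x, Subtype.ext hx⟩
  have hrel (x y : Fin n → ι) :
      MulAction.orbitRel (Perm (Fin n))ᵈᵐᵃ (Fin n → ι) x y ↔ Setoid.ker f x y := by
    rw [orbitRel_domMulAct_perm_iff, Setoid.ker_def, multideg_eq_toFinsupp, multideg_eq_toFinsupp,
      EmbeddingLike.apply_eq_iff_eq]
    exact (Subtype.ext_iff (a1 := f x) (a2 := f y)).symm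
  rw [Nat.card_congr ((Quotient.congrRight hrel).trans (Setoid.quotientKerEquivOfSurjective f hf)),
    Nat.card_eq_fintype_card, Sym.card_sym_eq_multichoose]

lemma sum_card_perm_fixing :
    ∑ z : Fin n → ι, Nat.card {π : Perm (Fin n) // ∀ i, z (π i) = z i}
      = n.factorial * (Fintype.card ι).multichoose n := by
  classical
  let _ : Fintype (Perm (Fin n))ᵈᵐᵃ := Fintype.ofEquiv _ DomMulAct.mk
  have hfix (π : Perm (Fin n)) : Fintype.card (MulAction.fixedBy (Fin n → ι) (DomMulAct.mk π))
      = #{z : Fin n → ι | ∀ i, z (π i) = z i} := by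
    rw [Fintype.card_subtype]
    simp [MulAction.mem_fixedBy, funext_iff, DomMulAct.smul_apply]
  calc ∑ z : Fin n → ι, Nat.card {π : Perm (Fin n) // ∀ i, z (π i) = z i}
      = ∑ π : Perm (Fin n), #{z : Fin n → ι | ∀ i, z (π i) = z i} := by
        simp only [Nat.card_eq_fintype_card, Fintype.card_subtype, Finset.card_filter]
        exact Finset.sum_comm
    _ = ∑ g : (Perm (Fin n))ᵈᵐᵃ, Fintype.card (MulAction.fixedBy (Fin n → ι) g) := by
        rw [← DomMulAct.mk.sum_comp]
        simp only [hfix]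
    _ = n.factorial * (Fintype.card ι).multichoose n := by
        rw [MulAction.sum_card_fixedBy_eq_card_orbits_mul_card_group, ← Nat.card_eq_fintype_card,
          ← Nat.card_eq_fintype_card, card_orbitRel_quotient_domMulAct_perm,
          Nat.card_congr DomMulAct.mk.symm, Nat.card_perm, Nat.card_eq_fintype_card,
          Fintype.card_fin, mul_comm]

lemma sum_card_perm_mul_prod {R : Type*} [CommSemiring R] (r : ι → R) :
    ∑ x : Fin n → ι, ∑ y : Fin n → ι,
      (Nat.card {π : Perm (Fin n) // ∀ i, x (π i) = y i} : R) * ((∏ i, r (x i)) * ∏ i, r (y i))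
      = n.factorial * (∑ j, r j ^ 2) ^ n := by
  classical
  have hcard (x y : Fin n → ι) : (Nat.card {π : Perm (Fin n) // ∀ i, x (π i) = y i} : R)
      = ∑ π : Perm (Fin n), if x ∘ π = y then 1 else 0 := by
    rw [Nat.card_eq_fintype_card, Fintype.card_subtype, Finset.card_filter, Nat.cast_sum]
    simp only [Nat.cast_ite, Nat.cast_one, Nat.cast_zero, funext_iff, Function.comp_apply]
  calc _ = ∑ x : Fin n → ι, ∑ π : Perm (Fin n), (∏ i, r (x i)) * ∏ i, r (x (π i)) := by
        refine Finset.sum_congr rfl fun x _ => ?_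
        simp only [hcard, Finset.sum_mul, ite_mul, one_mul, zero_mul]
        rw [Finset.sum_comm]
        simp [Finset.sum_ite_eq]
    _ = ∑ _π : Perm (Fin n), ∑ x : Fin n → ι, ∏ i, r (x i) ^ 2 := by
        rw [Finset.sum_comm]
        refine Finset.sum_congr rfl fun π _ => Finset.sum_congr rfl fun x _ => ?_
        rw [Equiv.prod_comp π (fun i => r (x i)), ← Finset.prod_mul_distrib]
        simp only [sq]
    _ = n.factorial * (∑ j, r j ^ 2) ^ n := by
        rw [Finset.sum_const, Finset.card_univ, Fintype.card_perm, Fintype.card_fin, nsmul_eq_mul,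
          ← Fin.prod_const, Fintype.prod_sum]

open MvPolynomial in
theorem eq_zero_of_forall_sum_mul_prod_eq_zero {R : Type*} [CommRing R] [IsDomain R]
    [CharZero R] (s : Set R) (hs : s.Infinite) {K : (Fin n → ι) → (Fin n → ι) → R}
    (hK : ∀ x y, multideg x ≠ multideg y → K x y = 0)
    (hK_perm : ∀ x y (σ τ : Perm (Fin n)), K (x ∘ σ) (y ∘ τ) = K x y)
    (hpoly : ∀ r : ι → R, (∀ j, r j ∈ s) →
      ∑ x, ∑ y, K x y * ((∏ i, r (x i)) * ∏ i, r (y i)) = 0)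
    (x y : Fin n → ι) : K x y = 0 := by
  classical
  have hQ : ∑ a, ∑ b, C (K a b) * ((∏ i, X (a i)) * ∏ i, X (b i)) = (0 : MvPolynomial ι R) :=
    funext_set (fun _ => s) (fun _ => hs) fun r hr => by simpa using hpoly r fun j => hr j trivial
  -- `K a b` can only contribute to the monomial `r ^ (2 · multideg x)` when `a`, `b` are
  -- rearrangements of `x`, and then `K a b = K x x`.
  have hterm (a b : Fin n → ι) :
      (if multideg a + multideg b = multideg x + multideg x then K a b else 0)
        = if multideg a = multideg x ∧ multideg b = multideg x then K x x else 0 := by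
    by_cases h : multideg a = multideg x ∧ multideg b = multideg x
    · obtain ⟨σ, rfl⟩ := eq_comp_perm_of_multideg_eq h.1.symm
      obtain ⟨τ, rfl⟩ := eq_comp_perm_of_multideg_eq h.2.symm
      rw [if_pos h, if_pos (by rw [h.1, h.2]), hK_perm]
    · rw [if_neg h, ite_eq_right_iff]
      refine fun hsum => hK a b fun hab => h ⟨?_, hab ▸ ?_⟩ <;>
      · ext j
        have := DFunLike.congr_fun hsum j
        simp only [Finsupp.add_apply, hab] at this ⊢
        omega
  have hdiag : K x x = 0 := by
    have hcoeff := congrArg (coeff (multideg x + multideg x)) hQ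
    simp only [coeff_sum, prod_X_eq_monomial_multideg, monomial_mul, C_mul_monomial, mul_one,
      coeff_monomial, coeff_zero, hterm, ite_and, Finset.sum_ite_irrel, Finset.sum_const_zero]
      at hcoeff
    rw [← Finset.sum_filter] at hcoeff
    simp only [← Finset.sum_filter, Finset.sum_const, nsmul_eq_mul, ← mul_assoc] at hcoeff
    have hx : #{a | multideg a = multideg x} ≠ 0 := Finset.card_ne_zero_of_mem (a := x) (by simp)
    simpa [hx] using hcoeff
  obtain hxy | hxy := eq_or_ne (multideg x) (multideg y)
  · obtain ⟨σ, rfl⟩ := eq_comp_perm_of_multideg_eq hxy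
    simpa [hdiag] using hK_perm x x 1 σ
  · exact hK x y hxy

end Tuples

section InvariantMeasure

lemma Continuous.integrable_of_ae_mem {X F : Type*} [TopologicalSpace X] [T2Space X]
    [MeasurableSpace X] [OpensMeasurableSpace X] [NormedAddCommGroup F] {μ : Measure X}
    [IsFiniteMeasure μ] {K : Set X} (hK : IsCompact K) (hμ : ∀ᵐ x ∂μ, x ∈ K) {f : X → F}
    (hf : Continuous f) : Integrable f μ := by
  rw [← Measure.restrict_eq_self_of_ae_mem hμ]
  exact hf.continuousOn.integrableOn_compact hK

lemma integral_comp_of_map_eq {E F : Type*} [TopologicalSpace E] [MeasurableSpace E]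
    [BorelSpace E] [NormedAddCommGroup F] [NormedSpace ℝ F] {μ : Measure E} (U : E ≃ₜ E)
    (hU : μ.map U = μ) (f : E → F) : ∫ x, f (U x) ∂μ = ∫ x, f x ∂μ :=
  MeasurePreserving.integral_comp' (f := U.toMeasurableEquiv) ⟨U.continuous.measurable, hU⟩ f

variable {𝕜 E : Type*} [RCLike 𝕜] [NormedAddCommGroup E] [InnerProductSpace 𝕜 E]
  [FiniteDimensional 𝕜 E]

lemma exists_linearIsometryEquiv_apply_eq {u v : E} (hu : ‖u‖ = 1) (hv : ‖v‖ = 1) :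
    ∃ U : E ≃ₗᵢ[𝕜] E, U u = v := by
  have hpos : 0 < Module.finrank 𝕜 E :=
    Module.finrank_pos_iff_exists_ne_zero.2 ⟨u, norm_ne_zero_iff.1 (by simp [hu])⟩
  let i₀ : Fin (Module.finrank 𝕜 E) := ⟨0, hpos⟩
  have hbasis (w : E) (hw : ‖w‖ = 1) :
      ∃ b : OrthonormalBasis (Fin (Module.finrank 𝕜 E)) 𝕜 E, b i₀ = w := by
    have hw' : Orthonormal 𝕜 (({i₀} : Set _).domRestrict fun _ => w) := by
      rw [orthonormal_iff_ite]
      rintro ⟨i, rfl⟩ ⟨j, rfl⟩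
      simp [Set.domRestrict, inner_self_eq_norm_sq_to_K, hw]
    obtain ⟨b, hb⟩ := hw'.exists_orthonormalBasis_extension_of_card_eq (by simp)
    exact ⟨b, hb i₀ rfl⟩
  obtain ⟨b, rfl⟩ := hbasis u hu
  obtain ⟨b', rfl⟩ := hbasis v hv
  exact ⟨b.equiv b' (Equiv.refl _), b.equiv_apply_basis b' _ i₀⟩

lemma integral_norm_inner_pow_eq [MeasurableSpace E] [BorelSpace E] {μ : Measure E}
    (hμ : ∀ U : E ≃ₗᵢ[𝕜] E, μ.map U = μ) {e : E} (he : ‖e‖ = 1) (m : ℕ) (ψ : E) :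
    ∫ θ, ‖⟪ψ, θ⟫_𝕜‖ ^ m ∂μ = ‖ψ‖ ^ m * ∫ θ, ‖⟪e, θ⟫_𝕜‖ ^ m ∂μ := by
  obtain ⟨v, hv, hψ⟩ : ∃ v : E, ‖v‖ = 1 ∧ ψ = (‖ψ‖ : 𝕜) • v := by
    by_cases hψ0 : ψ = 0
    · exact ⟨e, he, by simp [hψ0]⟩
    · refine ⟨(‖ψ‖ : 𝕜)⁻¹ • ψ, norm_smul_inv_norm hψ0, ?_⟩
      rw [smul_smul, mul_inv_cancel₀ (by simpa using hψ0), one_smul]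
  obtain ⟨U, rfl⟩ := exists_linearIsometryEquiv_apply_eq (𝕜 := 𝕜) he hv
  calc ∫ θ, ‖⟪ψ, θ⟫_𝕜‖ ^ m ∂μ = ∫ θ, ‖ψ‖ ^ m * ‖⟪U e, θ⟫_𝕜‖ ^ m ∂μ := by
        congr! 2 with θ
        conv_lhs => rw [hψ]
        simp [inner_smul_left, mul_pow]
    _ = ‖ψ‖ ^ m * ∫ θ, ‖⟪U e, U θ⟫_𝕜‖ ^ m ∂μ := by
        rw [integral_const_mul]
        exact congrArg _ (integral_comp_of_map_eq U.toHomeomorph (hμ U) _).symm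
    _ = ‖ψ‖ ^ m * ∫ θ, ‖⟪e, θ⟫_𝕜‖ ^ m ∂μ := by simp only [LinearIsometryEquiv.inner_map_map]

end InvariantMeasure

lemma Complex.exists_norm_eq_one_pow_mul_conj_pow_eq_neg_one {a b : ℕ} (h : a ≠ b) :
    ∃ u : ℂ, ‖u‖ = 1 ∧ u ^ a * conj u ^ b = -1 := by
  have hk : ((a : ℂ) - b) ≠ 0 := sub_ne_zero.2 (by exact_mod_cast h)
  refine ⟨exp ((Real.pi / (a - b) : ℝ) * I), norm_exp_ofReal_mul_I _, ?_⟩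
  rw [← exp_conj, ← exp_nat_mul, ← exp_nat_mul, ← exp_add, ← exp_pi_mul_I]
  congr 1
  simp only [map_mul, conj_ofReal, conj_I]
  push_cast
  field_simp
  ring

section ProductStates

variable {ι : Type*} {n : ℕ}

noncomputable def outerTensorPow (θ : EuclideanSpace ℂ ι) (x y : Fin n → ι) : ℂ :=
  (∏ i, θ (x i)) * conj (∏ i, θ (y i))

lemma outerTensorPow_comp_perm (θ : EuclideanSpace ℂ ι) (x y : Fin n → ι) (σ τ : Perm (Fin n)) :
    outerTensorPow θ (x ∘ σ) (y ∘ τ) = outerTensorPow θ x y := by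
  simp only [outerTensorPow, Function.comp_apply, Equiv.prod_comp σ (fun i => θ (x i)),
    Equiv.prod_comp τ (fun i => θ (y i))]

variable [Fintype ι]

lemma EuclideanSpace.exists_linearIsometryEquiv_apply_eq_mul (c : ι → ℂ) (hc : ∀ j, ‖c j‖ = 1) :
    ∃ U : EuclideanSpace ℂ ι ≃ₗᵢ[ℂ] EuclideanSpace ℂ ι, ∀ θ j, U θ j = c j * θ j := by
  have hc₀ (j : ι) : c j ≠ 0 := norm_ne_zero_iff.1 (by simp [hc j])
  exact ⟨LinearIsometryEquiv.piLpCongrRight 2 fun j =>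
    ⟨LinearEquiv.smulOfNeZero ℂ ℂ (c j) (hc₀ j), fun z => by simp [hc j]⟩, fun θ j => rfl⟩

lemma ofReal_norm_inner_pow_eq_sum (r : ι → ℝ) (θ : EuclideanSpace ℂ ι) :
    ((‖⟪WithLp.toLp 2 (fun j => (r j : ℂ)), θ⟫_ℂ‖ ^ (2 * n) : ℝ) : ℂ)
      = ∑ x : Fin n → ι, ∑ y : Fin n → ι,
          ((∏ i, (r (x i) : ℂ)) * ∏ i, (r (y i) : ℂ)) * outerTensorPow θ x y := by
  classical
  have hinner : ⟪WithLp.toLp 2 (fun j => (r j : ℂ)), θ⟫_ℂ = ∑ j, r j * θ j := by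
    simp [PiLp.inner_apply, mul_comm]
  rw [Complex.ofReal_pow, pow_mul, ← Complex.mul_conj', mul_pow, ← map_pow,
    hinner, Finset.sum_pow', Fintype.piFinset_univ, map_sum, Finset.sum_mul_sum]
  refine Finset.sum_congr rfl fun x _ => Finset.sum_congr rfl fun y _ => ?_
  simp only [outerTensorPow, Finset.prod_mul_distrib, map_mul, map_prod, Complex.conj_ofReal]
  ring

lemma sum_outerTensorPow_self (θ : EuclideanSpace ℂ ι) :
    ∑ z : Fin n → ι, outerTensorPow θ z z = ((‖θ‖ ^ (2 * n) : ℝ) : ℂ) := by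
  classical
  rw [pow_mul, EuclideanSpace.norm_sq_eq, Complex.ofReal_pow, Complex.ofReal_sum,
    Finset.sum_pow', Fintype.piFinset_univ]
  refine Finset.sum_congr rfl fun z _ => ?_
  simp only [outerTensorPow, map_prod, ← Finset.prod_mul_distrib, Complex.mul_conj',
    Complex.ofReal_pow]

variable [MeasurableSpace (EuclideanSpace ℂ ι)] [BorelSpace (EuclideanSpace ℂ ι)]
  {ω : Measure (EuclideanSpace ℂ ι)}

lemma integrable_outerTensorPow [IsFiniteMeasure ω] (hω : ∀ᵐ θ ∂ω, ‖θ‖ = 1)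
    (x y : Fin n → ι) : Integrable (fun θ => outerTensorPow θ x y) ω :=
  Continuous.integrable_of_ae_mem (isCompact_sphere 0 1) (by simpa using hω)
    (by unfold outerTensorPow; fun_prop)

lemma integral_outerTensorPow_eq_zero
    (hω_inv : ∀ U : EuclideanSpace ℂ ι ≃ₗᵢ[ℂ] EuclideanSpace ℂ ι, ω.map U = ω) {x y : Fin n → ι}
    (hxy : multideg x ≠ multideg y) : ∫ θ, outerTensorPow θ x y ∂ω = 0 := by
  classical
  obtain ⟨j, hj⟩ := Finsupp.ne_iff.1 hxy
  obtain ⟨u, hu, hu_pow⟩ := Complex.exists_norm_eq_one_pow_mul_conj_pow_eq_neg_one hj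
  obtain ⟨U, hU⟩ := EuclideanSpace.exists_linearIsometryEquiv_apply_eq_mul
    (Function.update 1 j u) fun k => by by_cases hk : k = j <;> simp [hk, hu]
  have hprod (z : Fin n → ι) (θ : EuclideanSpace ℂ ι) :
      ∏ i, U θ (z i) = u ^ multideg z j * ∏ i, θ (z i) := by
    have hphase : ∏ i, Function.update (1 : ι → ℂ) j u (z i) = u ^ multideg z j := by
      simp [Function.update_apply, Finset.prod_ite, multideg_apply]
    simp only [hU, Finset.prod_mul_distrib, hphase]
  have hneg : ∫ θ, outerTensorPow θ x y ∂ω = -∫ θ, outerTensorPow θ x y ∂ω := by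
    calc ∫ θ, outerTensorPow θ x y ∂ω = ∫ θ, outerTensorPow (U θ) x y ∂ω :=
          (integral_comp_of_map_eq U.toHomeomorph (hω_inv U) _).symm
      _ = ∫ θ, -outerTensorPow θ x y ∂ω := by
          congr! 2 with θ
          simp only [outerTensorPow, hprod, map_mul, map_pow]
          linear_combination (∏ i, θ (x i)) * conj (∏ i, θ (y i)) * hu_pow
      _ = -∫ θ, outerTensorPow θ x y ∂ω := integral_neg _
  linear_combination hneg / 2

lemma sum_integral_outerTensorPow_self [IsProbabilityMeasure ω] (hω : ∀ᵐ θ ∂ω, ‖θ‖ = 1) :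
    ∑ z : Fin n → ι, ∫ θ, outerTensorPow θ z z ∂ω = 1 := by
  rw [← integral_finsetSum _ fun z _ => integrable_outerTensorPow hω z z]
  calc ∫ θ, ∑ z : Fin n → ι, outerTensorPow θ z z ∂ω = ∫ _θ, (1 : ℂ) ∂ω :=
        integral_congr_ae <| hω.mono fun θ hθ => by simp [sum_outerTensorPow_self, hθ]
    _ = 1 := by simp

lemma sum_integral_outerTensorPow_mul_prod [IsFiniteMeasure ω] (hω : ∀ᵐ θ ∂ω, ‖θ‖ = 1)
    (hω_inv : ∀ U : EuclideanSpace ℂ ι ≃ₗᵢ[ℂ] EuclideanSpace ℂ ι, ω.map U = ω)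
    {e : EuclideanSpace ℂ ι} (he : ‖e‖ = 1) (r : ι → ℝ) :
    ∑ x : Fin n → ι, ∑ y : Fin n → ι,
      (∫ θ, outerTensorPow θ x y ∂ω) * ((∏ i, (r (x i) : ℂ)) * ∏ i, (r (y i) : ℂ))
      = (∫ θ, ‖⟪e, θ⟫_ℂ‖ ^ (2 * n) ∂ω : ℝ) * (∑ j, (r j : ℂ) ^ 2) ^ n := by
  have hint (x y : Fin n → ι) := integrable_outerTensorPow hω x y
  have hnorm : ‖WithLp.toLp 2 (fun j => (r j : ℂ))‖ ^ (2 * n) = (∑ j, r j ^ 2) ^ n := by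
    simp [pow_mul, EuclideanSpace.norm_sq_eq]
  calc _ = ∫ θ, ∑ x : Fin n → ι, ∑ y : Fin n → ι,
        ((∏ i, (r (x i) : ℂ)) * ∏ i, (r (y i) : ℂ)) * outerTensorPow θ x y ∂ω := by
        rw [integral_finsetSum _ fun x _ =>
          integrable_finsetSum _ fun y _ => (hint x y).const_mul _]
        refine Finset.sum_congr rfl fun x _ => ?_
        rw [integral_finsetSum _ fun y _ => (hint x y).const_mul _]
        exact Finset.sum_congr rfl fun y _ => by rw [integral_const_mul, mul_comm]
    _ = ∫ θ, ((‖⟪WithLp.toLp 2 (fun j => (r j : ℂ)), θ⟫_ℂ‖ ^ (2 * n) : ℝ) : ℂ) ∂ω := by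
        simp only [ofReal_norm_inner_pow_eq_sum]
    _ = _ := by
        rw [integral_complex_ofReal, integral_norm_inner_pow_eq hω_inv he, hnorm]
        push_cast
        ring

theorem factorial_mul_integral_outerTensorPow [IsFiniteMeasure ω] (hω : ∀ᵐ θ ∂ω, ‖θ‖ = 1)
    (hω_inv : ∀ U : EuclideanSpace ℂ ι ≃ₗᵢ[ℂ] EuclideanSpace ℂ ι, ω.map U = ω)
    {e : EuclideanSpace ℂ ι} (he : ‖e‖ = 1) (x y : Fin n → ι) :
    (n.factorial : ℂ) * ∫ θ, outerTensorPow θ x y ∂ω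
      = (∫ θ, ‖⟪e, θ⟫_ℂ‖ ^ (2 * n) ∂ω : ℝ) * Nat.card {π : Perm (Fin n) // ∀ i, x (π i) = y i} := by
  rw [← sub_eq_zero]
  refine eq_zero_of_forall_sum_mul_prod_eq_zero (Set.range ((↑) : ℝ → ℂ))
    (Set.infinite_range_of_injective Complex.ofReal_injective)
    (K := fun x y => (n.factorial : ℂ) * ∫ θ, outerTensorPow θ x y ∂ω
      - (∫ θ, ‖⟪e, θ⟫_ℂ‖ ^ (2 * n) ∂ω : ℝ) * Nat.card {π : Perm (Fin n) // ∀ i, x (π i) = y i})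
    (fun x y hxy => ?_) (fun x y σ τ => ?_) (fun r hr => ?_) x y
  · have : IsEmpty {π : Perm (Fin n) // ∀ i, x (π i) = y i} :=
      ⟨fun π => hxy (exists_perm_iff_multideg_eq.1 ⟨π.1, π.2⟩)⟩
    simp [integral_outerTensorPow_eq_zero hω_inv hxy]
  · simp only [outerTensorPow_comp_perm, Function.comp_apply, card_perm_comp_comp]
  · choose s hs using hr
    obtain rfl : (fun j => (s j : ℂ)) = r := funext hs
    simp only [sub_mul, Finset.sum_sub_distrib, mul_assoc, ← Finset.mul_sum]
    rw [sum_integral_outerTensorPow_mul_prod hω hω_inv he,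
      sum_card_perm_mul_prod (fun j => (s j : ℂ))]
    ring

end ProductStates

theorem sphere_average_of_product_states_general
    (n d : ℕ)
    [MeasurableSpace (EuclideanSpace ℂ (Fin d))]
    [BorelSpace (EuclideanSpace ℂ (Fin d))]
    (ω : Measure (EuclideanSpace ℂ (Fin d))) [IsProbabilityMeasure ω]
    (hsphere : ω {θ : EuclideanSpace ℂ (Fin d) | ‖θ‖ = 1}ᶜ = 0)
    (hinv : ∀ U : EuclideanSpace ℂ (Fin d) ≃ₗᵢ[ℂ] EuclideanSpace ℂ (Fin d),
      Measure.map (⇑U) ω = ω)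
    (x y : Fin n → Fin d) :
    (∫ θ, (∏ i, θ (x i)) * (starRingEnd ℂ) (∏ i, θ (y i)) ∂ω)
      = ((n + d - 1).choose n : ℂ)⁻¹ * (n.factorial : ℂ)⁻¹ *
        (Nat.card {π : Equiv.Perm (Fin n) // ∀ i, x (π i) = y i} : ℂ) := by
  have hω : ∀ᵐ θ ∂ω, ‖θ‖ = 1 := ae_iff.2 hsphere
  obtain ⟨e, he⟩ := hω.exists
  have hproj := factorial_mul_integral_outerTensorPow (n := n) hω hinv he
  have hfact : (n.factorial : ℂ) ≠ 0 := Nat.cast_ne_zero.2 n.factorial_ne_zero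
  have hc : ((∫ θ, ‖⟪e, θ⟫_ℂ‖ ^ (2 * n) ∂ω : ℝ) : ℂ) = ((n + d - 1).choose n : ℂ)⁻¹ := by
    have htrace := Finset.sum_congr rfl fun z (_ : z ∈ univ) => hproj z z
    rw [← Finset.mul_sum, ← Finset.mul_sum, sum_integral_outerTensorPow_self hω,
      ← Nat.cast_sum, sum_card_perm_fixing, Fintype.card_fin, Nat.multichoose_eq,
      add_comm d n] at htrace
    push_cast at htrace
    exact eq_inv_of_mul_eq_one_left (mul_left_cancel₀ hfact (by linear_combination -htrace))
  change ∫ θ, outerTensorPow θ x y ∂ω = _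
  rw [← inv_mul_cancel_left₀ hfact (∫ θ, outerTensorPow θ x y ∂ω), hproj x y, hc]
  ring

/-- The average over pure product states of `|θ⟩⟨θ|^{⊗n}`, with respect to the
rotation-invariant probability measure `ω` on the unit sphere of `ℂ^d`, equals
`binomial(n+d−1, n)⁻¹` times the orthogonal projector onto the symmetric
subspace of `(ℂ^d)^{⊗n}` (entrywise: `(n!)⁻¹·|{π : x ∘ π = y}|`). -/
theorem sphere_average_of_product_states
    (n d : ℕ) (hd : 1 ≤ d)
    [MeasurableSpace (EuclideanSpace ℂ (Fin d))]
    [BorelSpace (EuclideanSpace ℂ (Fin d))]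
    (ω : Measure (EuclideanSpace ℂ (Fin d))) [IsProbabilityMeasure ω]
    (hsphere : ω {θ : EuclideanSpace ℂ (Fin d) | ‖θ‖ = 1}ᶜ = 0)
    (hinv : ∀ U : EuclideanSpace ℂ (Fin d) ≃ₗᵢ[ℂ] EuclideanSpace ℂ (Fin d),
      Measure.map (⇑U) ω = ω)
    (x y : Fin n → Fin d) :
    (∫ θ, (∏ i, θ (x i)) * (starRingEnd ℂ) (∏ i, θ (y i)) ∂ω)
      = ((n + d - 1).choose n : ℂ)⁻¹ * (n.factorial : ℂ)⁻¹ *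
        (Nat.card {π : Equiv.Perm (Fin n) // ∀ i, x (π i) = y i} : ℂ) :=
  sphere_average_of_product_states_general n d ω hsphere hinv x y
end

section
/- Let ρ be a PSD complex matrix and P a complex matrix with Pᴴ = P and P·P = P (an orthogonal projector), both indexed by the same nonempty finite type. Then ‖ρ − P·ρ·P‖₁ ≤ 2·√( tr(ρ) · (tr(ρ) − tr(P·ρ·P)) ), where ‖M‖₁ denotes the trace norm of the Hermitian matrix M (the sum of the absolute values of its eigenvalues) and tr(ρ), tr(PρP) are real with tr(PρP) ≤ tr(ρ). (Gentle-measurement bound: projecting a state changes it little in trace norm if the projection succeeds with high probability.) -/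
open Matrix
open scoped Classical ComplexOrder

/-!
Write `Q = 1 - P`, so that `ρ - PρP = Qρ + PρQ`. Diagonalising the Hermitian matrix `ρ - PρP`
and flipping the signs of its negative eigenvalues gives a unitary `S` with
`‖ρ - PρP‖₁ = tr (S (ρ - PρP))`. Both `tr (SQρ)` and `tr (SPρQ)` are values of the
`ρ`-weighted semi-inner product `⟪x, y⟫ = tr (y ρ xᴴ)`, so Cauchy–Schwarz bounds them by
`√(tr ρ) √(tr QρQ)` and `√(tr QρQ) √(tr PρP)`. Finally `tr QρQ = tr ρ - tr PρP`, and in particular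
`tr PρP ≤ tr ρ`.
-/

namespace Matrix

variable {n : Type*} [Fintype n]

theorem trace_unitary_conj {R : Type*} [CommRing R] [StarRing R] [DecidableEq n]
    {U : Matrix n n R} (hU : U ∈ unitary (Matrix n n R)) (X : Matrix n n R) :
    (U * X * star U).trace = X.trace := by
  rw [trace_mul_cycle, Unitary.star_mul_self_of_mem hU, one_mul]

theorem diagonal_mem_unitary {R : Type*} [CommRing R] [StarRing R] [DecidableEq n]
    {d : n → R} (hd : ∀ i, star (d i) * d i = 1) : diagonal d ∈ unitary (Matrix n n R) := by
  rw [mem_unitaryGroup_iff', star_eq_conjTranspose, diagonal_conjTranspose,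
    diagonal_mul_diagonal, ← diagonal_one]
  exact congrArg diagonal (funext hd)

theorem IsHermitian.exists_mem_unitary_trace_mul_eq_traceNorm [DecidableEq n]
    {M : Matrix n n ℂ} (hM : M.IsHermitian) :
    ∃ S ∈ unitary (Matrix n n ℂ), (S * M).trace = traceNorm M := by
  set u := hM.eigenvectorUnitary
  set μ := hM.eigenvalues
  -- the sign of each eigenvalue, with `+1` at `0` so that the diagonal stays unitary
  let s : n → ℂ := fun i => if 0 ≤ μ i then 1 else -1
  have hs : ∀ i, star (s i) * s i = 1 := fun i => by dsimp only [s]; split_ifs <;> simp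
  have hsμ : ∀ i, s i * μ i = |μ i| := fun i => by
    dsimp only [s]; split_ifs with h
    · simp [abs_of_nonneg h]
    · simp [abs_of_neg (not_le.mp h)]
  refine ⟨Unitary.conjStarAlgAut ℂ _ u (diagonal s),
    Unitary.map_mem _ (diagonal_mem_unitary hs), ?_⟩
  calc (Unitary.conjStarAlgAut ℂ _ u (diagonal s) * M).trace
      = (Unitary.conjStarAlgAut ℂ _ u (diagonal s * diagonal (RCLike.ofReal ∘ μ))).trace := by
        rw [map_mul, ← hM.spectral_theorem]
    _ = ∑ i, s i * μ i := by
        rw [Unitary.conjStarAlgAut_apply, trace_unitary_conj u.2, diagonal_mul_diagonal,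
          trace_diagonal]
        rfl
    _ = traceNorm M := by
        simp only [hsμ, traceNorm, dif_pos hM]
        push_cast
        rfl

theorem PosSemidef.norm_trace_mul_mul_conjTranspose_le {𝕜 : Type*} [RCLike 𝕜]
    {M : Matrix n n 𝕜} (hM : M.PosSemidef) (x y : Matrix n n 𝕜) :
    ‖(y * M * xᴴ).trace‖ ≤ √(RCLike.re (x * M * xᴴ).trace) * √(RCLike.re (y * M * yᴴ).trace) := by
  -- the semi-inner product `⟪x, y⟫ = tr (y M xᴴ)` induced by `M`
  let _ := M.toMatrixSeminormedAddCommGroup hM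
  let _ := M.toMatrixInnerProductSpace hM
  exact norm_inner_le_norm (𝕜 := 𝕜) x y

theorem PosSemidef.norm_trace_unitary_mul_mul_conjTranspose_le {𝕜 : Type*} [RCLike 𝕜]
    [DecidableEq n] {M S : Matrix n n 𝕜} (hM : M.PosSemidef) (hS : S ∈ unitary (Matrix n n 𝕜))
    (x y : Matrix n n 𝕜) :
    ‖(S * y * M * xᴴ).trace‖ ≤
      √(RCLike.re (x * M * xᴴ).trace) * √(RCLike.re (y * M * yᴴ).trace) := by
  have h := hM.norm_trace_mul_mul_conjTranspose_le x (S * y)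
  rwa [conjTranspose_mul, ← star_eq_conjTranspose S,
    show S * y * M * (yᴴ * star S) = S * (y * M * yᴴ) * star S by simp only [mul_assoc],
    trace_unitary_conj hS] at h

theorem trace_one_sub_mul_mul_one_sub {R : Type*} [CommRing R] [DecidableEq n]
    {P : Matrix n n R} (hP : IsIdempotentElem P) (X : Matrix n n R) :
    ((1 - P) * X * (1 - P)).trace = X.trace - (P * X * P).trace := by
  have hPXP : (P * X * P).trace = (P * X).trace := by rw [trace_mul_cycle, hP.eq]
  have hXP : (X * P).trace = (P * X).trace := trace_mul_comm X P
  simp only [sub_mul, mul_sub, one_mul, mul_one, trace_sub, hPXP, hXP]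
  abel

theorem PosSemidef.re_trace_nonneg {𝕜 : Type*} [RCLike 𝕜] {M : Matrix n n 𝕜}
    (hM : M.PosSemidef) :
    0 ≤ RCLike.re M.trace :=
  (RCLike.nonneg_iff.mp hM.trace_nonneg).1

end Matrix

theorem gentle_measurement_general
    {n : Type*} [Fintype n] [DecidableEq n]
    (ρ P : Matrix n n ℂ) (hρ : ρ.PosSemidef)
    (hP : Pᴴ = P) (hProj : P * P = P) :
    traceNorm (ρ - P * ρ * P)
      ≤ 2 * Real.sqrt (ρ.trace.re * (ρ.trace.re - ((P * ρ * P).trace).re)) := by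
  set Q := 1 - P with hQdef
  have hQ : Qᴴ = Q := by simp [Q, hP]
  have hPρP : (P * ρ * P).PosSemidef := by simpa only [hP] using hρ.conjTranspose_mul_mul_same P
  have hQρQ : (Q * ρ * Q).PosSemidef := by simpa only [hQ] using hρ.conjTranspose_mul_mul_same Q
  have hdecomp : ρ - P * ρ * P = Q * ρ + P * ρ * Q := by rw [hQdef]; noncomm_ring
  obtain ⟨S, hS, hSΔ⟩ :=
    (hρ.isHermitian.sub hPρP.isHermitian).exists_mem_unitary_trace_mul_eq_traceNorm
  have h1 := hρ.norm_trace_unitary_mul_mul_conjTranspose_le hS 1 Q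
  have h2 := hρ.norm_trace_unitary_mul_mul_conjTranspose_le hS Q P
  simp only [hP, hQ, conjTranspose_one, mul_one, one_mul, RCLike.re_to_complex] at h1 h2
  have htrace : (Q * ρ * Q).trace.re = ρ.trace.re - (P * ρ * P).trace.re := by
    rw [hQdef, trace_one_sub_mul_mul_one_sub hProj, Complex.sub_re]
  set a := ρ.trace.re
  set b := (P * ρ * P).trace.re
  set q := (Q * ρ * Q).trace.re
  have ha : 0 ≤ a := hρ.re_trace_nonneg
  have hq : 0 ≤ q := hQρQ.re_trace_nonneg
  have hba : √b ≤ √a := Real.sqrt_le_sqrt (by linarith)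
  calc traceNorm (ρ - P * ρ * P) ≤ ‖(S * (ρ - P * ρ * P)).trace‖ := by
        rw [hSΔ, Complex.norm_real, Real.norm_eq_abs]; exact le_abs_self _
    _ = ‖(S * Q * ρ).trace + (S * P * ρ * Q).trace‖ := by
        rw [hdecomp, mul_add, trace_add, ← mul_assoc, ← mul_assoc, ← mul_assoc]
    _ ≤ √a * √q + √q * √b := norm_add_le_of_le h1 h2
    _ ≤ 2 * (√a * √q) := by nlinarith [Real.sqrt_nonneg q]
    _ = 2 * √(a * (a - b)) := by rw [← htrace, Real.sqrt_mul ha]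

/-- Gentle-measurement bound: for a PSD matrix `ρ` and an orthogonal projector `P`,
`‖ρ − PρP‖₁ ≤ 2·√(tr(ρ)·(tr(ρ) − tr(PρP)))`. -/
theorem gentle_measurement
    {n : Type*} [Fintype n] [DecidableEq n] [Nonempty n]
    (ρ P : Matrix n n ℂ) (hρ : ρ.PosSemidef)
    (hP : Pᴴ = P) (hProj : P * P = P) :
    traceNorm (ρ - P * ρ * P)
      ≤ 2 * Real.sqrt (ρ.trace.re * (ρ.trace.re - ((P * ρ * P).trace).re)) :=
  gentle_measurement_general ρ P hρ hP hProj
end
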